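/- arXiv:1308.4715 — 5 statements merged into one kernel-verified Lean document; each statement's English description precedes it below -/
import Mathlib

section
/- Let T be a tree on n vertices and let r be any vertex of T. For every gamble p on V(T) there exists a cop walk w on T with w(0) = r such that the expected capture time of w against p is at most n. (Lemma 2.1: the cop can capture the known gambler in expected time at most n on any tree of order n, from any starting vertex.) -/
open MeasureTheory ProbabilityTheory
open scoped ENNReal

/-- A cop walk on a graph `G`: at every time step the cop stays put or moves
along an edge of `G`. -/
def IsCopWalk {V : Type*} (G : SimpleGraph V) (w : ℕ → V) : Prop :=
  ∀ t : ℕ, w (t + 1) = w t ∨ G.Adj (w t) (w (t + 1))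

/-- The capture time `T_w = inf {t ≥ 1 : w t = X t ω}` of the walk `w` against the
gambler positions `X`, valued in `[0, ∞]` (it is `∞` if no such `t` exists). -/
noncomputable def captureTime {V Ω : Type*} (w : ℕ → V) (X : ℕ → Ω → V) (ω : Ω) : ℝ≥0∞ :=
  sInf {r : ℝ≥0∞ | ∃ t : ℕ, 1 ≤ t ∧ w t = X t ω ∧ r = t}

/-- `X` is an i.i.d. sequence of `V`-valued random variables, each with law `p`. -/
def IsIIDWithLaw {V Ω : Type*} [MeasurableSpace V] [MeasurableSpace Ω]
    (μ : Measure Ω) (p : PMF V) (X : ℕ → Ω → V) : Prop :=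
  iIndepFun X μ ∧
    ∀ t : ℕ, Measurable (X t) ∧ μ.map (X t) = p.toMeasure

section Combinatorics

open Finset

private lemma prod_one_sub_le_one (a : ℕ → ℝ≥0∞) (s : Finset ℕ) :
    ∏ i ∈ s, (1 - a i) ≤ 1 :=
  Finset.prod_le_one (fun _ _ => zero_le) (fun _ _ => tsub_le_self)

private lemma key_step {q P x : ℝ≥0∞} (hq1 : q ≤ 1) (hP : P ≤ 1) (hx : x ≤ q) :
    q * P + (P * (1 - x) + x) ≤ P + q := by
  have hx1 : x ≤ 1 := hx.trans hq1
  have e1 : P * (1 - x) + P * x = P := by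
    rw [← mul_add, tsub_add_cancel_of_le hx1, mul_one]
  have e2 : x * P + x * (1 - P) = x := by
    rw [← mul_add, add_tsub_cancel_of_le hP, mul_one]
  have e3 : P + (1 - P) = 1 := add_tsub_cancel_of_le hP
  set Y := 1 - x with hY
  set Z := 1 - P with hZ
  calc q * P + (P * Y + x)
      = q * P + (P * Y + (x * P + x * Z)) := by rw [e2]
    _ = (P * Y + P * x) + (q * P + x * Z) := by ring
    _ = P + (q * P + x * Z) := by rw [e1]
    _ ≤ P + (q * P + q * Z) := by gcongr
    _ = P + q * (P + Z) := by ring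
    _ = P + q := by rw [e3, mul_one]

private lemma key_main {q : ℝ≥0∞} (hq1 : q ≤ 1) (a : ℕ → ℝ≥0∞) (ha : ∀ s, a s ≤ q)
    (m : ℕ) (ham : ∀ s, m + 1 ≤ s → a s = q) (M : ℕ) :
    q * (∑ t ∈ range M, ∏ s ∈ Icc 1 t, (1 - a s)) + (∏ s ∈ Icc 1 M, (1 - a s))
      + ∑ s ∈ Icc 1 (min M m), a s ≤ q * ((min M m : ℕ) : ℝ≥0∞) + 1 := by
  induction M with
  | zero => simp
  | succ M ih =>
      have hπ : (∏ s ∈ Icc 1 M, (1 - a s)) ≤ 1 := prod_one_sub_le_one a _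
      have hprod : (∏ s ∈ Icc 1 (M + 1), (1 - a s))
          = (∏ s ∈ Icc 1 M, (1 - a s)) * (1 - a (M + 1)) :=
        Finset.prod_Icc_succ_top (by omega) _
      rw [Finset.sum_range_succ, hprod]
      set B := ∑ t ∈ range M, ∏ s ∈ Icc 1 t, (1 - a s) with hB
      set P := ∏ s ∈ Icc 1 M, (1 - a s) with hP
      rcases le_or_gt (M + 1) m with h | h
      · rw [min_eq_left (by omega : M ≤ m)] at ih
        rw [min_eq_left h, Finset.sum_Icc_succ_top (by omega : 1 ≤ M + 1)]
        set A := ∑ s ∈ Icc 1 M, a s with hA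
        set x := a (M + 1) with hxdef
        have step := key_step hq1 hπ (ha (M + 1))
        calc q * (B + P) + P * (1 - x) + (A + x)
            = (q * B + A) + (q * P + (P * (1 - x) + x)) := by ring
          _ ≤ (q * B + A) + (P + q) := by gcongr
          _ = (q * B + P + A) + q := by ring
          _ ≤ (q * ((M : ℕ) : ℝ≥0∞) + 1) + q := by gcongr
          _ = q * (((M : ℕ) : ℝ≥0∞) + 1) + 1 := by ring
          _ = q * (((M + 1 : ℕ) : ℝ≥0∞)) + 1 := by push_cast; ring
      · have hm : m ≤ M := by omega
        rw [min_eq_right hm] at ih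
        rw [min_eq_right (by omega : m ≤ M + 1)]
        have hx : a (M + 1) = q := ham _ (by omega)
        rw [hx]
        set A := ∑ s ∈ Icc 1 m, a s with hA
        have e : q * P + P * (1 - q) = P := by
          rw [mul_comm q P, ← mul_add, add_tsub_cancel_of_le hq1, mul_one]
        calc q * (B + P) + P * (1 - q) + A
            = (q * B + A) + (q * P + P * (1 - q)) := by ring
          _ = (q * B + A) + P := by rw [e]
          _ = q * B + P + A := by ring
          _ ≤ q * ((m : ℕ) : ℝ≥0∞) + 1 := ih

/-- The main combinatorial construction: a cop walk along the tree path from `r`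
to a maximizer of `p`, then sitting there, has total survival mass at most `n`. -/
private lemma exists_good_walk {V : Type*} [Fintype V] {n : ℕ}
    (T : SimpleGraph V) (hT : T.IsTree) (hn : Fintype.card V = n) (r : V) (p : PMF V) :
    ∃ w : ℕ → V, IsCopWalk T w ∧ w 0 = r ∧
      ∑' t : ℕ, ∏ s ∈ Finset.Icc 1 t, (1 - p (w s)) ≤ (n : ℝ≥0∞) := by
  classical
  obtain ⟨u, -, hu⟩ := Finset.exists_max_image Finset.univ (fun v => p v) ⟨r, Finset.mem_univ r⟩
  have hu' : ∀ v, p v ≤ p u := fun v => hu v (Finset.mem_univ v)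
  have hq1 : p u ≤ 1 := p.coe_le_one u
  have hsum : ∑ v : V, p v = 1 := by rw [← tsum_fintype (L := SummationFilter.unconditional _)]; exact p.tsum_coe
  have hnq : (1 : ℝ≥0∞) ≤ (n : ℝ≥0∞) * p u := by
    calc (1 : ℝ≥0∞) = ∑ v : V, p v := hsum.symm
      _ ≤ ∑ _v : V, p u := Finset.sum_le_sum fun v _ => hu' v
      _ = (n : ℝ≥0∞) * p u := by
          rw [Finset.sum_const, Finset.card_univ, hn, nsmul_eq_mul]
  have hq0 : p u ≠ 0 := by
    intro h
    rw [h, mul_zero] at hnq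
    simp at hnq
  have hqtop : p u ≠ ∞ := p.apply_ne_top u
  obtain ⟨W⟩ := hT.isConnected.preconnected r u
  set L : List V := W.toPath.1.support with hLdef
  have hnodup : L.Nodup := W.toPath.2.support_nodup
  have hLne : L ≠ [] := SimpleGraph.Walk.support_ne_nil _
  have hlen1 : 1 ≤ L.length := List.length_pos_iff.2 hLne
  have hlenn : L.length ≤ n := hn ▸ hnodup.length_le_card
  set d : ℕ := L.length - 1 with hd
  set w : ℕ → V := fun t => L.getD t u with hw
  have hwu : ∀ s, d ≤ s → w s = u := by
    intro s hs
    rcases lt_or_ge s L.length with h | h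
    · have hs' : s = L.length - 1 := by omega
      subst hs'
      have hlast : L.getLast hLne = u := SimpleGraph.Walk.getLast_support W.toPath.1
      rw [hw]
      simp only
      rw [List.getD_eq_getElem L u h, ← hlast, List.getLast_eq_getElem]
    · exact List.getD_eq_default L u h
  have h0 : w 0 = r := by
    have hcons : L = r :: L.tail := SimpleGraph.Walk.support_eq_cons W.toPath.1
    rw [hw]
    simp only
    rw [hcons]
    simp
  have hcop : IsCopWalk T w := by
    intro t
    rcases lt_or_ge (t + 1) L.length with h | h
    · right
      have hchain : List.IsChain T.Adj L := SimpleGraph.Walk.isChain_adj_support W.toPath.1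
      have hc := List.isChain_iff_getElem.mp hchain t (by omega)
      have e1 : w t = L[t]'(by omega) := List.getD_eq_getElem L u (by omega)
      have e2 : w (t + 1) = L[t + 1]'h := List.getD_eq_getElem L u h
      rw [e1, e2]
      simpa [List.get_eq_getElem] using hc
    · left
      have h2 : w (t + 1) = u := List.getD_eq_default L u h
      have h3 : w t = u := hwu t (by omega)
      rw [h2, h3]
  refine ⟨w, hcop, h0, ?_⟩
  set a : ℕ → ℝ≥0∞ := fun s => p (w s) with ha_def
  have ha : ∀ s, a s ≤ p u := fun s => hu' (w s)
  set m : ℕ := d - 1 with hm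
  have ham : ∀ s, m + 1 ≤ s → a s = p u := by
    intro s hs
    rw [ha_def]
    simp only
    rw [hwu s (by omega)]
  have claim : ∀ M, m ≤ M →
      (∑ t ∈ range M, ∏ s ∈ Finset.Icc 1 t, (1 - a s)) ≤ (n : ℝ≥0∞) := by
    intro M hM
    have key := key_main hq1 a ha m ham M
    rw [min_eq_right hM] at key
    suffices hfin : p u * (∑ t ∈ range M, ∏ s ∈ Finset.Icc 1 t, (1 - a s))
        ≤ p u * (n : ℝ≥0∞) by
      exact (ENNReal.mul_le_mul_iff_right hq0 hqtop).mp hfin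
    set B := ∑ t ∈ range M, ∏ s ∈ Finset.Icc 1 t, (1 - a s) with hB
    set P := ∏ s ∈ Finset.Icc 1 M, (1 - a s) with hPd
    by_cases hd0 : d = 0
    · have hm0 : m = 0 := by omega
      rw [hm0] at key
      simp only [Finset.Icc_eq_empty_of_lt (by omega : (0:ℕ) < 1), Finset.sum_empty,
        Nat.cast_zero, mul_zero, zero_add, add_zero] at key
      calc p u * B ≤ p u * B + P := le_self_add
        _ ≤ 1 := key
        _ ≤ (n : ℝ≥0∞) * p u := hnq
        _ = p u * (n : ℝ≥0∞) := mul_comm _ _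
    · have hdm : d = m + 1 := by omega
      have hdlen : d + 1 = L.length := by omega
      set A := ∑ s ∈ Finset.Icc 1 m, a s with hA
      -- key : p u * B + P + A ≤ p u * m + 1
      set PF : Finset V := (Finset.range (d + 1)).image w with hPF
      have hinj : Set.InjOn w (Finset.range (d + 1)) := by
        intro s hs t ht hst
        simp only [Finset.coe_range, Set.mem_Iio] at hs ht
        have hs' : s < L.length := by omega
        have ht' : t < L.length := by omega
        have es : w s = L[s]'hs' := List.getD_eq_getElem L u hs'
        have et : w t = L[t]'ht' := List.getD_eq_getElem L u ht'
        rw [es, et] at hst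
        exact (List.Nodup.getElem_inj_iff hnodup).mp hst
      have hPFsum : ∑ v ∈ PF, p v = ∑ s ∈ range (d + 1), a s :=
        Finset.sum_image fun x hx y hy hxy =>
          hinj (Finset.mem_coe.2 hx) (Finset.mem_coe.2 hy) hxy
      have hcard : PF.card = d + 1 := by
        rw [hPF, Finset.card_image_of_injOn hinj, Finset.card_range]
      have hsplit : ∑ v ∈ PF, p v + ∑ v ∈ PFᶜ, p v = 1 := by
        rw [Finset.sum_add_sum_compl]; exact hsum
      have hcompl : ∑ v ∈ PFᶜ, p v ≤ ((n - (d + 1) : ℕ) : ℝ≥0∞) * p u := by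
        calc ∑ v ∈ PFᶜ, p v ≤ PFᶜ.card • p u :=
              Finset.sum_le_card_nsmul _ _ _ fun v _ => hu' v
          _ = ((n - (d + 1) : ℕ) : ℝ≥0∞) * p u := by
              rw [Finset.card_compl, hcard, hn, nsmul_eq_mul]
      have hrange : ∑ s ∈ range (d + 1), a s = a 0 + (A + p u) := by
        have h1 : ∑ i ∈ range d, a (i + 1) = ∑ s ∈ Finset.Icc 1 d, a s := by
          rw [← Finset.Ico_add_one_right_eq_Icc, Finset.sum_Ico_eq_sum_range]
          simp [add_comm]
        have h2 : ∑ s ∈ Finset.Icc 1 d, a s = A + a d := by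
          rw [hdm]
          exact Finset.sum_Icc_succ_top (by omega) _
        have h3 : a d = p u := by
          rw [ha_def]; simp only; rw [hwu d le_rfl]
        rw [Finset.sum_range_succ', h1, h2, h3]
        ring
      have hcast : ((n - (d + 1) : ℕ) : ℝ≥0∞) + ((d + 1 : ℕ) : ℝ≥0∞) = (n : ℝ≥0∞) := by
        rw [← Nat.cast_add]
        congr 1
        omega
      have hcount : (1 : ℝ≥0∞) + ((d + 1 : ℕ) : ℝ≥0∞) * p u
          ≤ (a 0 + (A + p u)) + (n : ℝ≥0∞) * p u := by
        calc (1 : ℝ≥0∞) + ((d + 1 : ℕ) : ℝ≥0∞) * p u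
            = (∑ v ∈ PF, p v + ∑ v ∈ PFᶜ, p v) + ((d + 1 : ℕ) : ℝ≥0∞) * p u := by
              rw [hsplit]
          _ ≤ (∑ v ∈ PF, p v + ((n - (d + 1) : ℕ) : ℝ≥0∞) * p u)
              + ((d + 1 : ℕ) : ℝ≥0∞) * p u := by gcongr
          _ = ∑ v ∈ PF, p v
              + (((n - (d + 1) : ℕ) : ℝ≥0∞) + ((d + 1 : ℕ) : ℝ≥0∞)) * p u := by ring
          _ = (a 0 + (A + p u)) + (n : ℝ≥0∞) * p u := by
              rw [hcast, hPFsum, hrange]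
      have hAtop : A ≠ ∞ := by
        have : A < ∞ := by
          rw [hA]
          exact ENNReal.sum_lt_top.2 fun s _ =>
            lt_of_le_of_lt (ha s) (lt_of_le_of_lt hq1 ENNReal.one_lt_top)
        exact this.ne
      have hDtop : ((d + 1 : ℕ) : ℝ≥0∞) * p u ≠ ∞ :=
        ENNReal.mul_ne_top (ENNReal.natCast_ne_top _) hqtop
      have main : (p u * B + P + ((d + 1 : ℕ) : ℝ≥0∞) * p u) + A
          ≤ ((p u * (n : ℝ≥0∞) + ((d + 1 : ℕ) : ℝ≥0∞) * p u)) + A := by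
        calc (p u * B + P + ((d + 1 : ℕ) : ℝ≥0∞) * p u) + A
            = (p u * B + P + A) + ((d + 1 : ℕ) : ℝ≥0∞) * p u := by ring
          _ ≤ (p u * ((m : ℕ) : ℝ≥0∞) + 1) + ((d + 1 : ℕ) : ℝ≥0∞) * p u := by gcongr
          _ = p u * ((m : ℕ) : ℝ≥0∞) + (1 + ((d + 1 : ℕ) : ℝ≥0∞) * p u) := by ring
          _ ≤ p u * ((m : ℕ) : ℝ≥0∞) + ((a 0 + (A + p u)) + (n : ℝ≥0∞) * p u) := by
              gcongr
          _ ≤ p u * ((m : ℕ) : ℝ≥0∞) + ((p u + (A + p u)) + (n : ℝ≥0∞) * p u) := by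
              gcongr
              exact ha 0
          _ = ((p u * (((m : ℕ) : ℝ≥0∞) + 1 + 1) + p u * (n : ℝ≥0∞))) + A := by ring
          _ = ((p u * (n : ℝ≥0∞) + ((d + 1 : ℕ) : ℝ≥0∞) * p u)) + A := by
              have : (((m : ℕ) : ℝ≥0∞) + 1 + 1) = ((d + 1 : ℕ) : ℝ≥0∞) := by
                rw [hdm]
                push_cast
                ring
              rw [this]
              ring
      have main2 := (ENNReal.add_le_add_iff_right hAtop).mp main
      have main3 := (ENNReal.add_le_add_iff_right hDtop).mp main2
      calc p u * B ≤ p u * B + P := le_self_add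
        _ ≤ p u * (n : ℝ≥0∞) := main3
  apply ENNReal.tsum_le_of_sum_range_le
  intro M
  calc (∑ t ∈ range M, ∏ s ∈ Finset.Icc 1 t, (1 - a s))
      ≤ ∑ t ∈ range (max M m), ∏ s ∈ Finset.Icc 1 t, (1 - a s) :=
        Finset.sum_le_sum_of_subset (Finset.range_subset_range.2 (le_max_left _ _))
    _ ≤ (n : ℝ≥0∞) := claim _ (le_max_right _ _)

end Combinatorics

section Probability

open Finset

private lemma captureTime_le_tsum_indicator {V Ω : Type*} (w : ℕ → V) (X : ℕ → Ω → V)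
    (ω : Ω) :
    captureTime w X ω ≤
      ∑' t : ℕ, Set.indicator (⋂ s ∈ Finset.Icc 1 t, X s ⁻¹' ({w s}ᶜ))
        (fun _ => (1 : ℝ≥0∞)) ω := by
  classical
  by_cases hcap : ∃ t : ℕ, 1 ≤ t ∧ w t = X t ω
  · set k := Nat.find hcap with hk
    have hspec := Nat.find_spec hcap
    have h1 : captureTime w X ω ≤ (k : ℝ≥0∞) :=
      sInf_le ⟨k, hspec.1, hspec.2, rfl⟩
    refine h1.trans ?_
    have hmem : ∀ t, t < k → ω ∈ ⋂ s ∈ Finset.Icc 1 t, X s ⁻¹' ({w s}ᶜ) := by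
      intro t ht
      refine Set.mem_iInter₂.2 fun s hs => ?_
      simp only [Finset.mem_Icc] at hs
      intro hXs
      simp only [Set.mem_singleton_iff] at hXs
      exact Nat.find_min hcap (lt_of_le_of_lt hs.2 ht) ⟨hs.1, hXs.symm⟩
    calc (k : ℝ≥0∞) = ∑ t ∈ range k, (1 : ℝ≥0∞) := by simp
      _ = ∑ t ∈ range k, Set.indicator (⋂ s ∈ Finset.Icc 1 t, X s ⁻¹' ({w s}ᶜ))
          (fun _ => (1 : ℝ≥0∞)) ω := by
            refine Finset.sum_congr rfl fun t ht => ?_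
            rw [Set.indicator_of_mem (hmem t (Finset.mem_range.1 ht))]
      _ ≤ _ := ENNReal.sum_le_tsum _
  · have hempty : {r : ℝ≥0∞ | ∃ t : ℕ, 1 ≤ t ∧ w t = X t ω ∧ r = t} = ∅ := by
      ext x
      simp only [Set.mem_setOf_eq, Set.mem_empty_iff_false, iff_false]
      rintro ⟨t, h1, h2, -⟩
      exact hcap ⟨t, h1, h2⟩
    rw [captureTime, hempty, sInf_empty]
    have hmem : ∀ t : ℕ, ω ∈ ⋂ s ∈ Finset.Icc 1 t, X s ⁻¹' ({w s}ᶜ) := by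
      intro t
      refine Set.mem_iInter₂.2 fun s hs => ?_
      simp only [Finset.mem_Icc] at hs
      intro hXs
      simp only [Set.mem_singleton_iff] at hXs
      exact hcap ⟨s, hs.1, hXs.symm⟩
    have : ∑' t : ℕ, Set.indicator (⋂ s ∈ Finset.Icc 1 t, X s ⁻¹' ({w s}ᶜ))
        (fun _ => (1 : ℝ≥0∞)) ω = ∑' _t : ℕ, (1 : ℝ≥0∞) :=
      tsum_congr fun t => Set.indicator_of_mem (hmem t) _
    rw [this, ENNReal.tsum_const_eq_top_of_ne_zero one_ne_zero]

end Probability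

/-- **Lemma 2.1 (cop vs. known gambler on a tree).**
Let `T` be a tree on `n` vertices and `r` any vertex.  For every gamble `p` on the
vertices there is a cop walk `w` on `T` starting at `r` whose expected capture time
against the i.i.d. gambler with gamble `p` is at most `n`. -/
theorem tree_known_gambler_expected_capture_le_card
    {V : Type*} [Fintype V] [MeasurableSpace V] [DiscreteMeasurableSpace V]
    {n : ℕ} (T : SimpleGraph V) (hT : T.IsTree) (hn : Fintype.card V = n)
    (r : V) (p : PMF V) :
    ∃ w : ℕ → V, IsCopWalk T w ∧ w 0 = r ∧
      ∀ (Ω : Type*) (_ : MeasurableSpace Ω) (μ : Measure Ω), IsProbabilityMeasure μ →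
        ∀ X : ℕ → Ω → V, IsIIDWithLaw μ p X →
          ∫⁻ ω, captureTime w X ω ∂μ ≤ (n : ℝ≥0∞) := by
  classical
  obtain ⟨w, hcop, h0, hbound⟩ := exists_good_walk T hT hn r p
  refine ⟨w, hcop, h0, ?_⟩
  intro Ω mΩ μ hμ X hX
  letI := mΩ
  obtain ⟨hind, hmeas⟩ := hX
  set A : ℕ → Set Ω := fun t => ⋂ s ∈ Finset.Icc 1 t, X s ⁻¹' ({w s}ᶜ) with hA
  have hAmeas : ∀ t, MeasurableSet (A t) := by
    intro t
    exact Finset.measurableSet_biInter _ fun s _ =>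
      (hmeas s).1 (measurableSet_singleton (w s)).compl
  have hμA : ∀ t, μ (A t) = ∏ s ∈ Finset.Icc 1 t, (1 - p (w s)) := by
    intro t
    have hindep := hind.measure_inter_preimage_eq_mul (Finset.Icc 1 t)
      (sets := fun s => ({w s}ᶜ : Set V))
      (fun i _ => (measurableSet_singleton (w i)).compl)
    rw [hA]
    simp only
    rw [hindep]
    refine Finset.prod_congr rfl fun s _ => ?_
    have hmap : μ (X s ⁻¹' ({w s}ᶜ)) = p.toMeasure ({w s}ᶜ) := by
      rw [← (hmeas s).2, Measure.map_apply (hmeas s).1 (measurableSet_singleton (w s)).compl]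
    rw [hmap, measure_compl (measurableSet_singleton (w s)) (measure_ne_top _ _),
      measure_univ, PMF.toMeasure_apply_singleton _ _ (measurableSet_singleton (w s))]
  calc ∫⁻ ω, captureTime w X ω ∂μ
      ≤ ∫⁻ ω, ∑' t : ℕ, Set.indicator (A t) (fun _ => (1 : ℝ≥0∞)) ω ∂μ :=
        lintegral_mono fun ω => captureTime_le_tsum_indicator w X ω
    _ = ∑' t : ℕ, ∫⁻ ω, Set.indicator (A t) (fun _ => (1 : ℝ≥0∞)) ω ∂μ :=
        lintegral_tsum fun t => (measurable_const.indicator (hAmeas t)).aemeasurable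
    _ = ∑' t : ℕ, μ (A t) := tsum_congr fun t => lintegral_indicator_one (hAmeas t)
    _ = ∑' t : ℕ, ∏ s ∈ Finset.Icc 1 t, (1 - p (w s)) := tsum_congr hμA
    _ ≤ (n : ℝ≥0∞) := hbound
end

section
/- Let G be a connected graph on n vertices and let r be any vertex of G. For every gamble p on V(G) there exists a cop walk w on G with w(0) = r such that the expected capture time of w against p is at most n. (Upper-bound half of Theorem 3.2, obtained by playing on a spanning tree of G.) -/
open MeasureTheory ProbabilityTheory
open scoped ENNReal

set_option maxHeartbeats 1000000

namespace CopGamble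

variable {V : Type*}

/-! ### Real-valued survival and cost of a list of arrivals -/

/-- Survival probability after the arrivals in `L`, hazard `q`. -/
def survR (q : V → ℝ) : List V → ℝ
  | [] => 1
  | u :: L => (1 - q u) * survR q L

/-- Expected-time cost of the arrivals in `L` (sum of prefix survivals). -/
def costR (q : V → ℝ) : List V → ℝ
  | [] => 0
  | u :: L => 1 + (1 - q u) * costR q L

@[simp] lemma survR_nil (q : V → ℝ) : survR q ([] : List V) = 1 := rfl
@[simp] lemma survR_cons (q : V → ℝ) (u : V) (L : List V) :
    survR q (u :: L) = (1 - q u) * survR q L := rfl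
@[simp] lemma costR_nil (q : V → ℝ) : costR q ([] : List V) = 0 := rfl
@[simp] lemma costR_cons (q : V → ℝ) (u : V) (L : List V) :
    costR q (u :: L) = 1 + (1 - q u) * costR q L := rfl

lemma survR_nonneg {q : V → ℝ} (hq : ∀ x, q x ≤ 1) (L : List V) : 0 ≤ survR q L := by
  induction L with
  | nil => norm_num
  | cons u L ih => simpa using mul_nonneg (by linarith [hq u]) ih

lemma costR_nonneg {q : V → ℝ} (hq : ∀ x, q x ≤ 1) (L : List V) : 0 ≤ costR q L := by
  induction L with
  | nil => norm_num
  | cons u L ih =>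
    have := hq u
    have : 0 ≤ (1 - q u) * costR q L := mul_nonneg (by linarith) ih
    simpa using by linarith

lemma costR_le_length {q : V → ℝ} (hq0 : ∀ x, 0 ≤ q x) (hq : ∀ x, q x ≤ 1) (L : List V) :
    costR q L ≤ L.length := by
  induction L with
  | nil => simp
  | cons u L ih =>
    have h1 := costR_nonneg hq L
    have h2 := hq0 u
    have h3 := hq u
    have : (1 - q u) * costR q L ≤ costR q L := by nlinarith
    simp only [costR_cons, List.length_cons]
    push_cast
    linarith

lemma survR_append {q : V → ℝ} (L₁ L₂ : List V) :
    survR q (L₁ ++ L₂) = survR q L₁ * survR q L₂ := by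
  induction L₁ with
  | nil => simp
  | cons u L ih => simp [ih]; ring

lemma costR_append {q : V → ℝ} (L₁ L₂ : List V) :
    costR q (L₁ ++ L₂) = costR q L₁ + survR q L₁ * costR q L₂ := by
  induction L₁ with
  | nil => simp
  | cons u L ih => simp [ih]; ring

/-! ### Rooted forests -/

/-- A rooted forest on vertex type `V`, encoded left-child right-sibling style:
`node v children siblings`. -/
inductive Fst (V : Type*) : Type _
  | nil : Fst V
  | node : V → Fst V → Fst V → Fst V

namespace Fst

/-- The list of labels of a forest. -/
def labels : Fst V → List V
  | nil => []
  | node v c r => v :: (labels c ++ labels r)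

@[simp] lemma labels_nil : (nil : Fst V).labels = [] := rfl
@[simp] lemma labels_node (v : V) (c r : Fst V) :
    (node v c r).labels = v :: (c.labels ++ r.labels) := rfl

/-- The forest is walkable from `ρ`: every root is equal or adjacent to its parent. -/
def Walkable (adj : V → V → Prop) : V → Fst V → Prop
  | _, nil => True
  | ρ, node v c r => (v = ρ ∨ adj ρ v) ∧ Walkable adj v c ∧ Walkable adj ρ r

@[simp] lemma walkable_nil (adj : V → V → Prop) (ρ : V) : Walkable adj ρ nil := trivial
@[simp] lemma walkable_node (adj : V → V → Prop) (ρ v : V) (c r : Fst V) :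
    Walkable adj ρ (node v c r) ↔
      (v = ρ ∨ adj ρ v) ∧ Walkable adj v c ∧ Walkable adj ρ r := Iff.rfl

/-- "Every sitting strategy fails the budget" predicate, along the recursive
(survival, remaining budget) bookkeeping. -/
def AllFail (q : V → ℝ) : Fst V → ℝ → ℝ → Prop
  | nil, _, _ => True
  | node v c r, P, G => q v * G < P ∧ AllFail q c (P * (1 - q v)) (G - P) ∧ AllFail q r P G

@[simp] lemma allFail_nil (q : V → ℝ) (P G : ℝ) : AllFail q nil P G := trivial
@[simp] lemma allFail_node (q : V → ℝ) (v : V) (c r : Fst V) (P G : ℝ) :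
    AllFail q (node v c r) P G ↔
      q v * G < P ∧ AllFail q c (P * (1 - q v)) (G - P) ∧ AllFail q r P G := Iff.rfl

lemma labels_eq_nil_iff (F : Fst V) : F.labels = [] ↔ F = nil := by
  cases F <;> simp

/-- Graft a new leaf `x` below the (first) node labelled `u`. -/
def graft [DecidableEq V] : Fst V → V → V → Fst V
  | nil, _, _ => nil
  | node w c r, u, x =>
    if w = u then node w (node x nil c) r
    else node w (graft c u x) (graft r u x)

lemma graft_eq_of_not_mem [DecidableEq V] {F : Fst V} {u : V} (x : V)
    (h : u ∉ F.labels) : graft F u x = F := by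
  induction F with
  | nil => rfl
  | node w c r ihc ihr =>
    simp only [labels_node, List.mem_cons, List.mem_append] at h
    push_neg at h
    simp only [graft, if_neg (Ne.symm h.1), ihc h.2.1, ihr h.2.2]

lemma graft_labels_perm [DecidableEq V] {F : Fst V} {u : V} (x : V)
    (hu : u ∈ F.labels) (hnd : F.labels.Nodup) :
    (graft F u x).labels.Perm (x :: F.labels) := by
  induction F with
  | nil => simp at hu
  | node w c r ihc ihr =>
    simp only [labels_node, List.nodup_cons, List.nodup_append] at hnd
    obtain ⟨hw, hc, hr, hdisj⟩ := hnd
    by_cases h : w = u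
    · simp only [graft, if_pos h, labels_node, List.nil_append]
      exact List.Perm.swap x w _ |>.symm |>.symm
    · simp only [labels_node, List.mem_cons, List.mem_append] at hu
      rcases hu with rfl | hu | hu
      · exact absurd rfl h
      · have hur : u ∉ r.labels := fun hh => hdisj u hu u hh rfl
        have hg : graft (node w c r) u x = node w (graft c u x) r := by
          simp only [graft, if_neg h, graft_eq_of_not_mem x hur]
        rw [hg]
        have h1 : ((graft c u x).labels ++ r.labels).Perm ((x :: c.labels) ++ r.labels) :=
          (ihc hu hc).append_right _
        have h2 : ((node w (graft c u x) r).labels).Perm (w :: x :: (c.labels ++ r.labels)) :=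
          h1.cons w
        exact h2.trans (List.Perm.swap x w _)
      · have huc : u ∉ c.labels := fun hh => hdisj u hh u hu rfl
        have hg : graft (node w c r) u x = node w c (graft r u x) := by
          simp only [graft, if_neg h, graft_eq_of_not_mem x huc]
        rw [hg]
        have h1 : (c.labels ++ (graft r u x).labels).Perm (c.labels ++ x :: r.labels) :=
          (ihr hu hr).append_left _
        have h2 : (c.labels ++ x :: r.labels).Perm (x :: (c.labels ++ r.labels)) :=
          List.perm_middle
        exact ((h1.trans h2).cons w).trans (List.Perm.swap x w _)

lemma graft_walkable [DecidableEq V] {adj : V → V → Prop} {F : Fst V} {ρ u x : V}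
    (hW : Walkable adj ρ F) (hadj : adj u x) : Walkable adj ρ (graft F u x) := by
  induction F generalizing ρ with
  | nil => trivial
  | node w c r ihc ihr =>
    obtain ⟨h1, h2, h3⟩ := hW
    by_cases h : w = u
    · rw [graft, if_pos h]
      exact ⟨h1, ⟨Or.inr (h ▸ hadj), trivial, h2⟩, h3⟩
    · rw [graft, if_neg h]
      exact ⟨h1, ihc h2, ihr h3⟩

end Fst

/-! ### The key combinatorial lemmas -/

/-- Polynomial core of the budget-splitting inequality. -/
lemma key_poly {x P G m : ℝ} (hx : x * G ≤ P) (hG : (1 + m) * P ≤ G) :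
    x * G * (G - P) + m * P * G * (1 - x) ≤ (1 + m) * P * (G - P) := by
  nlinarith [mul_nonneg (sub_nonneg.2 hx) (sub_nonneg.2 hG)]

/-- If every vertex of the forest fails its budget, then the total hazard mass is
less than `size * P / G` (stated in multiplied form). -/
lemma allFail_sum {q : V → ℝ} (hq0 : ∀ x, 0 ≤ q x) :
    ∀ (F : Fst V) (P G : ℝ), 0 < P → (F.labels.length : ℝ) * P ≤ G →
      Fst.AllFail q F P G →
      ((F.labels.map q).sum * G ≤ (F.labels.length : ℝ) * P ∧
        (F ≠ Fst.nil → (F.labels.map q).sum * G < (F.labels.length : ℝ) * P)) := by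
  intro F
  induction F with
  | nil => intro P G hP hlen _; simp
  | node w c r ihc ihr =>
    intro P G hP hlen hAF
    obtain ⟨h1, h2, h3⟩ := hAF
    have hq0w := hq0 w
    simp only [Fst.labels_node, List.length_cons, List.length_append, List.map_cons,
      List.map_append, List.sum_cons, List.sum_append] at hlen ⊢
    set lc : ℝ := (c.labels.length : ℝ) with hlc
    set lr : ℝ := (r.labels.length : ℝ) with hlr
    have hlc0 : 0 ≤ lc := by positivity
    have hlr0 : 0 ≤ lr := by positivity
    have hlen' : (1 + lc + lr) * P ≤ G := by
      push_cast at hlen; nlinarith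
    have hG : 0 < G := lt_of_lt_of_le hP (by nlinarith)
    have hqw1 : q w < 1 := by nlinarith
    -- sibling bound
    have hlenr : (r.labels.length : ℝ) * P ≤ G := by rw [← hlr]; nlinarith
    have IHr := ihr P G hP hlenr h3
    set sc : ℝ := (c.labels.map q).sum with hsc
    set sr : ℝ := (r.labels.map q).sum with hsr
    have hsr_le : sr * G ≤ lr * P := IHr.1
    -- child bound
    by_cases hcnil : c = Fst.nil
    · subst hcnil
      simp only [Fst.labels_nil, List.map_nil, List.sum_nil, List.length_nil] at hsc ⊢
      have hsc0 : sc = 0 := hsc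
      constructor
      · push_cast
        nlinarith [le_of_lt h1]
      · intro _
        push_cast
        nlinarith
    · have hlc1 : 1 ≤ lc := by
        rw [hlc]
        have : c.labels ≠ [] := fun hh => hcnil ((Fst.labels_eq_nil_iff c).mp hh)
        have : 0 < c.labels.length := List.length_pos_iff.mpr this
        exact_mod_cast this
      have hGP : 0 < G - P := by nlinarith
      have hP' : 0 < P * (1 - q w) := by nlinarith
      have hlenc : (c.labels.length : ℝ) * (P * (1 - q w)) ≤ G - P := by
        rw [← hlc]
        nlinarith
      have IHc := ihc (P * (1 - q w)) (G - P) hP' hlenc h2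
      have hsc_lt : sc * (G - P) < lc * (P * (1 - q w)) := IHc.2 hcnil
      -- key inequality: (q w + sc) * G ≤ (1 + lc) * P
      have hkey : (q w + sc) * G * (G - P) < (1 + lc) * P * (G - P) := by
        have hpoly : q w * G * (G - P) + lc * P * G * (1 - q w) ≤ (1 + lc) * P * (G - P) :=
          key_poly (le_of_lt h1) (by nlinarith)
        have : sc * (G - P) * G < lc * (P * (1 - q w)) * G :=
          (mul_lt_mul_iff_of_pos_right hG).mpr hsc_lt
        nlinarith
      have hmain : (q w + sc) * G < (1 + lc) * P := by
        have := (mul_lt_mul_iff_of_pos_right hGP).mp hkey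
        exact this
      constructor
      · push_cast; nlinarith
      · intro _; push_cast; nlinarith

/-- From failure of `AllFail`, extract a target vertex `v` and an approach path `D`
with the good sit inequality (in multiplied form). -/
lemma exists_good {q : V → ℝ} {adj : V → V → Prop} :
    ∀ (F : Fst V) (ρ : V) (P G : ℝ), Fst.Walkable adj ρ F → ¬ Fst.AllFail q F P G →
      ∃ (D : List V) (v : V),
        List.Chain (fun a b => b = a ∨ adj a b) ρ (D ++ [v]) ∧
        (D ++ [v]).length ≤ F.labels.length ∧
        P * survR q D ≤ q v * (G - P * costR q D) := by
  intro F
  induction F with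
  | nil => intro ρ P G _ hAF; exact absurd trivial hAF
  | node w c r ihc ihr =>
    intro ρ P G hW hAF
    obtain ⟨hadj, hWc, hWr⟩ := hW
    rw [Fst.allFail_node, not_and_or, not_and_or] at hAF
    rcases hAF with h | h | h
    · -- the root w itself is good
      refine ⟨[], w, ?_, ?_, ?_⟩
      · exact List.Chain.cons hadj List.Chain.nil
      · simp
      · push_neg at h
        simp only [survR_nil, costR_nil, mul_one, mul_zero, sub_zero]
        exact h
    · -- some vertex in the child forest is good
      obtain ⟨D, v, hchain, hlen, hineq⟩ := ihc w (P * (1 - q w)) (G - P) hWc h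
      refine ⟨w :: D, v, ?_, ?_, ?_⟩
      · exact List.Chain.cons hadj hchain
      · have h1 : (D ++ [v]).length ≤ c.labels.length := hlen
        simp only [List.cons_append, List.length_cons, List.length_append,
          Fst.labels_node, List.length_nil] at h1 ⊢
        omega
      · simp only [survR_cons, costR_cons]
        calc P * ((1 - q w) * survR q D) = P * (1 - q w) * survR q D := by ring
          _ ≤ q v * ((G - P) - P * (1 - q w) * costR q D) := hineq
          _ = q v * (G - P * (1 + (1 - q w) * costR q D)) := by ring
    · -- some vertex in the sibling forest is good
      obtain ⟨D, v, hchain, hlen, hineq⟩ := ihr ρ P G hWr h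
      refine ⟨D, v, hchain, ?_, hineq⟩
      refine le_trans hlen ?_
      simp only [Fst.labels_node, List.length_cons, List.length_append]
      omega


/-! ### Spanning forest of a connected graph -/

lemma exists_spanning [Fintype V] [DecidableEq V] (G : SimpleGraph V) (hG : G.Connected)
    (r : V) :
    ∃ F : Fst V, Fst.Walkable G.Adj r F ∧ F.labels.Nodup ∧ ∀ v : V, v ∈ F.labels := by
  suffices h : ∀ (k : ℕ) (F : Fst V), Fst.Walkable G.Adj r F → F.labels.Nodup →
      r ∈ F.labels → Fintype.card V ≤ F.labels.length + k →
      ∃ F' : Fst V, Fst.Walkable G.Adj r F' ∧ F'.labels.Nodup ∧ ∀ v : V, v ∈ F'.labels by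
    refine h (Fintype.card V) (Fst.node r Fst.nil Fst.nil) ⟨Or.inl rfl, trivial, trivial⟩
      (by simp) (by simp) (by simp)
  intro k
  induction k with
  | zero =>
    intro F hW hnd hr hcard
    refine ⟨F, hW, hnd, ?_⟩
    have hlen : F.labels.toFinset.card = Fintype.card V := by
      rw [List.toFinset_card_of_nodup hnd]
      have := hnd.length_le_card
      omega
    have huniv : F.labels.toFinset = Finset.univ := Finset.eq_univ_of_card _ hlen
    intro v
    have : v ∈ F.labels.toFinset := huniv ▸ Finset.mem_univ v
    exact List.mem_toFinset.mp this
  | succ k ih =>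
    intro F hW hnd hr hcard
    by_cases hc : ∀ v : V, v ∈ F.labels
    · exact ⟨F, hW, hnd, hc⟩
    · push_neg at hc
      obtain ⟨v₀, hv₀⟩ := hc
      obtain ⟨W⟩ := hG.preconnected r v₀
      obtain ⟨d, -, hdf, hds⟩ := W.exists_boundary_dart {y | y ∈ F.labels} hr hv₀
      have hperm := Fst.graft_labels_perm (F := F) (u := d.fst) d.snd hdf hnd
      refine ih (Fst.graft F d.fst d.snd) (Fst.graft_walkable hW d.adj) ?_ ?_ ?_
      · exact hperm.nodup_iff.mpr (List.nodup_cons.mpr ⟨hds, hnd⟩)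
      · exact hperm.mem_iff.mpr (List.mem_cons.mpr (Or.inr hr))
      · have := hperm.length_eq
        simp only [List.length_cons] at this
        omega

/-! ### ENNReal versions of cost and survival -/

open scoped ENNReal

/-- ENNReal survival. -/
noncomputable def survE (p : V → ℝ≥0∞) : List V → ℝ≥0∞
  | [] => 1
  | u :: L => (1 - p u) * survE p L

/-- ENNReal cost. -/
noncomputable def costE (p : V → ℝ≥0∞) : List V → ℝ≥0∞
  | [] => 0
  | u :: L => 1 + (1 - p u) * costE p L

@[simp] lemma survE_nil (p : V → ℝ≥0∞) : survE p ([] : List V) = 1 := rfl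
@[simp] lemma survE_cons (p : V → ℝ≥0∞) (u : V) (L : List V) :
    survE p (u :: L) = (1 - p u) * survE p L := rfl
@[simp] lemma costE_nil (p : V → ℝ≥0∞) : costE p ([] : List V) = 0 := rfl
@[simp] lemma costE_cons (p : V → ℝ≥0∞) (u : V) (L : List V) :
    costE p (u :: L) = 1 + (1 - p u) * costE p L := rfl

lemma one_sub_eq_ofReal {a : ℝ≥0∞} (ha : a ≤ 1) :
    (1 : ℝ≥0∞) - a = ENNReal.ofReal (1 - a.toReal) := by
  have hat : a ≠ ∞ := (lt_of_le_of_lt ha ENNReal.one_lt_top).ne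
  rw [ENNReal.ofReal_sub _ ENNReal.toReal_nonneg, ENNReal.ofReal_one,
    ENNReal.ofReal_toReal hat]

lemma survE_eq_ofReal (p : V → ℝ≥0∞) (hp : ∀ x, p x ≤ 1) (L : List V) :
    survE p L = ENNReal.ofReal (survR (fun x => (p x).toReal) L) := by
  induction L with
  | nil => simp
  | cons u L ih =>
    have h1 : (0:ℝ) ≤ 1 - (p u).toReal := by
      have := ENNReal.toReal_mono (by norm_num) (hp u)
      simp at this
      linarith
    rw [survE_cons, survR_cons, ih, one_sub_eq_ofReal (hp u), ← ENNReal.ofReal_mul h1]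

lemma costE_eq_ofReal (p : V → ℝ≥0∞) (hp : ∀ x, p x ≤ 1) (L : List V) :
    costE p L = ENNReal.ofReal (costR (fun x => (p x).toReal) L) := by
  induction L with
  | nil => simp
  | cons u L ih =>
    have h1 : (0:ℝ) ≤ 1 - (p u).toReal := by
      have := ENNReal.toReal_mono (by norm_num) (hp u)
      simp at this
      linarith
    rw [costE_cons, costR_cons, ih, one_sub_eq_ofReal (hp u), ← ENNReal.ofReal_mul h1,
      ← ENNReal.ofReal_one, ← ENNReal.ofReal_add (by norm_num)
        (mul_nonneg h1 (costR_nonneg (fun x => ?_) L))]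
    have := ENNReal.toReal_mono (by norm_num : (1:ℝ≥0∞) ≠ ⊤) (hp x)
    simpa using this

/-- The expected capture time of the walk "arrivals `M`, then sit at `v` forever". -/
lemma tsum_prod_getD (p : V → ℝ≥0∞) (hp : ∀ x, p x ≤ 1) :
    ∀ (M : List V) (v : V),
      ∑' t : ℕ, ∏ i ∈ Finset.range t, (1 - p (M.getD i v)) =
        costE p M + survE p M * (p v)⁻¹ := by
  intro M
  induction M with
  | nil =>
    intro v
    have h1 : ∀ t : ℕ, ∏ i ∈ Finset.range t, (1 - p (([] : List V).getD i v))
        = (1 - p v) ^ t := by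
      intro t
      simp [List.getD_nil]
    simp only [h1]
    rw [ENNReal.tsum_geometric, ENNReal.sub_sub_cancel ENNReal.one_ne_top (hp v)]
    simp
  | cons u M ih =>
    intro v
    rw [tsum_eq_zero_add' ENNReal.summable]
    have h0 : ∏ i ∈ Finset.range 0, (1 - p ((u :: M).getD i v)) = 1 := by simp
    have hsucc : ∀ t : ℕ, ∏ i ∈ Finset.range (t+1), (1 - p ((u :: M).getD i v))
        = (∏ i ∈ Finset.range t, (1 - p (M.getD i v))) * (1 - p u) := by
      intro t
      rw [Finset.prod_range_succ']
      simp [List.getD_cons_succ, List.getD_cons_zero]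
    simp only [h0, hsucc]
    rw [ENNReal.tsum_mul_right, ih v]
    rw [costE_cons, survE_cons]
    ring

end CopGamble

/-- **Upper-bound half of Theorem 3.2.**
Let `G` be a connected graph on `n` vertices and `r` any vertex.  For every gamble `p`
there is a cop walk `w` on `G` starting at `r` whose expected capture time against the
i.i.d. gambler with gamble `p` is at most `n`. -/
theorem connected_known_gambler_expected_capture_le_card
    {V : Type*} [Fintype V] [MeasurableSpace V] [DiscreteMeasurableSpace V]
    {n : ℕ} (G : SimpleGraph V) (hG : G.Connected) (hn : Fintype.card V = n)
    (r : V) (p : PMF V) :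
    ∃ w : ℕ → V, IsCopWalk G w ∧ w 0 = r ∧
      ∀ (Ω : Type*) (_ : MeasurableSpace Ω) (μ : Measure Ω), IsProbabilityMeasure μ →
        ∀ X : ℕ → Ω → V, IsIIDWithLaw μ p X →
          ∫⁻ ω, captureTime w X ω ∂μ ≤ (n : ℝ≥0∞) := by
  classical
  open CopGamble in
  subst hn
  haveI : Nonempty V := ⟨r⟩
  set n := Fintype.card V with hndef
  have hn0 : 0 < n := Fintype.card_pos
  set q : V → ℝ := fun v => (p v).toReal with hqdef
  have hp1 : ∀ x, p x ≤ 1 := fun x => p.coe_le_one x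
  have hptop : ∀ x, p x ≠ ∞ := fun x => p.apply_ne_top x
  have hq0 : ∀ x, 0 ≤ q x := fun x => ENNReal.toReal_nonneg
  have hq1 : ∀ x, q x ≤ 1 := by
    intro x
    have := ENNReal.toReal_mono (by norm_num : (1:ℝ≥0∞) ≠ ⊤) (hp1 x)
    simpa using this
  obtain ⟨F, hW, hnd, hcomp⟩ := CopGamble.exists_spanning G hG r
  have huniv : F.labels.toFinset = Finset.univ :=
    Finset.eq_univ_iff_forall.mpr fun v => List.mem_toFinset.mpr (hcomp v)
  have hFlen : F.labels.length = n := by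
    rw [← List.toFinset_card_of_nodup hnd, huniv, hndef]
    rfl
  have hsum : (F.labels.map q).sum = 1 := by
    have h1 : F.labels.toFinset.sum q = (F.labels.map q).sum := List.sum_toFinset q hnd
    have h2 : ∑ x ∈ Finset.univ, p x = 1 := by
      rw [← tsum_fintype (L := SummationFilter.unconditional V)]; exact p.tsum_coe
    have h3 : ∑ x ∈ Finset.univ, q x = 1 := by
      have := ENNReal.toReal_sum (s := Finset.univ) (f := fun x => p x)
        (fun a _ => hptop a)
      rw [h2] at this
      simpa using this.symm
    rw [← h1, huniv, h3]
  have hFnil : F ≠ CopGamble.Fst.nil := by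
    intro h
    have := hcomp r
    rw [h] at this
    simp at this
  have hnAF : ¬ CopGamble.Fst.AllFail q F 1 (n : ℝ) := by
    intro hAF
    have hlenP : (F.labels.length : ℝ) * 1 ≤ (n : ℝ) := by
      rw [hFlen]; simp
    have hstrict := (CopGamble.allFail_sum hq0 F 1 (n : ℝ) one_pos hlenP hAF).2 hFnil
    rw [hsum, hFlen] at hstrict
    simp at hstrict
  obtain ⟨D, v, hchain, hlenM, hineq⟩ :=
    CopGamble.exists_good F r 1 (n : ℝ) hW hnAF
  rw [one_mul, one_mul] at hineq
  set M : List V := D ++ [v] with hMdef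
  have hMne : M ≠ [] := by simp [hMdef]
  have hMpos : 0 < M.length := List.length_pos_iff.mpr hMne
  have hMlen : M.length ≤ n := by rw [← hFlen]; exact hlenM
  set w : ℕ → V := fun t => if t = 0 then r else M.getD (t - 1) v with hwdef
  have hw0 : w 0 = r := rfl
  have hwsucc : ∀ t : ℕ, w (t + 1) = M.getD t v := by
    intro t
    simp [hwdef]
  -- the last entry of M is v
  have hlastv : M.getLast hMne = v := by
    have h := List.getLast_append_singleton (a := v) D
    exact h
  have hlast : ∀ (i : ℕ) (h : i < M.length), i + 1 = M.length → M.get ⟨i, h⟩ = v := by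
    intro i h hi
    have hfin : (⟨i, h⟩ : Fin M.length) = ⟨M.length - 1, by omega⟩ :=
      Fin.ext (by show i = M.length - 1; omega)
    rw [hfin, List.get_eq_getElem]
    simp only [← List.getLast_eq_getElem hMne, hlastv]
  obtain ⟨hchain0, hchain1⟩ : (∀ h : 0 < M.length, M[0] = r ∨ G.Adj r M[0]) ∧
      ∀ (i : ℕ) (h : i < M.length - 1), M[i+1] = M[i] ∨ G.Adj M[i] M[i+1] := by
    have H := List.isChain_iff_getElem.mp hchain
    exact ⟨fun h => by simpa using H 0 (by simp; omega),
      fun i h => H (i+1) (by simp; omega)⟩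
  -- cop walk
  have hcop : IsCopWalk G w := by
    intro t
    match t with
    | 0 =>
      rw [hw0, hwsucc 0, List.getD_eq_getElem _ _ hMpos]
      exact hchain0 hMpos
    | (t + 1) =>
      rw [hwsucc t, hwsucc (t+1)]
      by_cases h1 : t + 1 < M.length
      · have ht : t < M.length := by omega
        rw [List.getD_eq_getElem _ _ ht, List.getD_eq_getElem _ _ h1]
        have := hchain1 t (by omega)
        exact this
      · push_neg at h1
        rw [List.getD_eq_default _ _ h1]
        by_cases h2 : t < M.length
        · have hl := hlast t h2 (by omega)
          rw [List.get_eq_getElem] at hl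
          rw [List.getD_eq_getElem _ _ h2, hl]
          exact Or.inl rfl
        · push_neg at h2
          rw [List.getD_eq_default _ _ h2]
          exact Or.inl rfl
  refine ⟨w, hcop, hw0, ?_⟩
  intro Ω mΩ μ hμ X hX
  obtain ⟨hind, hXm⟩ := hX
  set A : ℕ → Set Ω := fun t => ⋂ s ∈ Finset.Icc 1 t, X s ⁻¹' ({w s}ᶜ) with hAdef
  have hAmeas : ∀ t, MeasurableSet (A t) := by
    intro t
    exact Finset.measurableSet_biInter _
      (fun s _ => (hXm s).1 (measurableSet_singleton _).compl)
  have hmemA : ∀ (t : ℕ) (ω : Ω), ω ∈ A t ↔ ∀ s, 1 ≤ s → s ≤ t → w s ≠ X s ω := by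
    intro t ω
    simp only [hAdef, Set.mem_iInter, Set.mem_preimage, Set.mem_compl_iff,
      Set.mem_singleton_iff, Finset.mem_Icc]
    constructor
    · intro h s h1 h2
      exact fun hh => (h s ⟨h1, h2⟩) hh.symm
    · intro h s hs
      exact fun hh => (h s hs.1 hs.2) hh.symm
  -- pointwise bound on the capture time
  have hpt : ∀ ω, captureTime w X ω ≤
      ∑' t : ℕ, (A t).indicator (fun _ => (1 : ℝ≥0∞)) ω := by
    intro ω
    by_cases hcap : ∃ t : ℕ, 1 ≤ t ∧ w t = X t ω
    · set k := Nat.find hcap with hkdef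
      have hkspec := Nat.find_spec hcap
      have hkmem : captureTime w X ω ≤ (k : ℝ≥0∞) :=
        sInf_le ⟨k, hkspec.1, hkspec.2, rfl⟩
      refine le_trans hkmem ?_
      have hsub : ∀ t, t < k → ω ∈ A t := by
        intro t ht
        rw [hmemA]
        intro s h1 h2
        have hsk : s < k := by omega
        have := Nat.find_min hcap hsk
        rw [not_and] at this
        exact this h1
      calc (k : ℝ≥0∞) = ∑ t ∈ Finset.range k, (1 : ℝ≥0∞) := by simp
        _ = ∑ t ∈ Finset.range k, (A t).indicator (fun _ => (1 : ℝ≥0∞)) ω := by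
            refine Finset.sum_congr rfl fun t ht => ?_
            rw [Set.indicator_of_mem (hsub t (Finset.mem_range.mp ht))]
        _ ≤ ∑' t : ℕ, (A t).indicator (fun _ => (1 : ℝ≥0∞)) ω := ENNReal.sum_le_tsum _
    · push_neg at hcap
      have hall : ∀ t, ω ∈ A t := by
        intro t
        rw [hmemA]
        intro s h1 _
        exact hcap s h1
      have : ∑' t : ℕ, (A t).indicator (fun _ => (1 : ℝ≥0∞)) ω = ∑' _ : ℕ, (1 : ℝ≥0∞) := by
        refine tsum_congr fun t => ?_
        rw [Set.indicator_of_mem (hall t)]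
      rw [this, ENNReal.tsum_const_eq_top_of_ne_zero one_ne_zero]
      exact le_top
  have hint : ∫⁻ ω, captureTime w X ω ∂μ ≤ ∑' t : ℕ, μ (A t) := by
    calc ∫⁻ ω, captureTime w X ω ∂μ
        ≤ ∫⁻ ω, ∑' t : ℕ, (A t).indicator (fun _ => (1 : ℝ≥0∞)) ω ∂μ := lintegral_mono hpt
      _ = ∑' t : ℕ, ∫⁻ ω, (A t).indicator (fun _ => (1 : ℝ≥0∞)) ω ∂μ :=
          lintegral_tsum fun t => (measurable_const.indicator (hAmeas t)).aemeasurable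
      _ = ∑' t : ℕ, μ (A t) := by
          refine tsum_congr fun t => ?_
          exact lintegral_indicator_one (hAmeas t)
  have hmeasA : ∀ t : ℕ, μ (A t) = ∏ s ∈ Finset.Icc 1 t, (1 - p (w s)) := by
    intro t
    have hmul := hind.measure_inter_preimage_eq_mul (Finset.Icc 1 t)
      (sets := fun s => {w s}ᶜ) (fun i _ => (measurableSet_singleton _).compl)
    rw [hAdef]
    rw [hmul]
    refine Finset.prod_congr rfl fun s _ => ?_
    rw [← Measure.map_apply (hXm s).1 (measurableSet_singleton _).compl, (hXm s).2,
      prob_compl_eq_one_sub (measurableSet_singleton _),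
      PMF.toMeasure_apply_singleton _ _ (measurableSet_singleton _)]
  have hprod : ∀ t : ℕ, ∏ s ∈ Finset.Icc 1 t, (1 - p (w s)) =
      ∏ i ∈ Finset.range t, (1 - p (M.getD i v)) := by
    intro t
    induction t with
    | zero => simp
    | succ t iht =>
      rw [Finset.prod_Icc_succ_top (by omega : 1 ≤ t + 1), iht, Finset.prod_range_succ,
        hwsucc t]
  have hEsum : ∑' t : ℕ, ∏ i ∈ Finset.range t, (1 - p (M.getD i v)) =
      CopGamble.costE (fun x => p x) M + CopGamble.survE (fun x => p x) M * (p v)⁻¹ :=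
    CopGamble.tsum_prod_getD (fun x => p x) hp1 M v
  -- the final numeric bound
  have hfinal : CopGamble.costE (fun x => p x) M + CopGamble.survE (fun x => p x) M * (p v)⁻¹
      ≤ (n : ℝ≥0∞) := by
    rw [CopGamble.costE_eq_ofReal _ hp1, CopGamble.survE_eq_ofReal _ hp1]
    have hcostM : CopGamble.costR q M = CopGamble.costR q D + CopGamble.survR q D := by
      rw [hMdef, CopGamble.costR_append]
      simp
    have hsurvM : CopGamble.survR q M = CopGamble.survR q D * (1 - q v) := by
      rw [hMdef, CopGamble.survR_append]
      simp
    have hsurvD0 : 0 ≤ CopGamble.survR q D := CopGamble.survR_nonneg hq1 D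
    have hcostD0 : 0 ≤ CopGamble.costR q D := CopGamble.costR_nonneg hq1 D
    by_cases hv : q v = 0
    · -- the target vertex has zero mass: then the survival is 0
      have h1 : CopGamble.survR q D ≤ 0 := by
        have := hineq
        rw [hv] at this
        simpa using this
      have h2 : CopGamble.survR q D = 0 := le_antisymm h1 hsurvD0
      have h3 : CopGamble.survR q M = 0 := by rw [hsurvM, h2, zero_mul]
      rw [h3]
      simp only [ENNReal.ofReal_zero, zero_mul, add_zero]
      have h4 : CopGamble.costR q M ≤ (n : ℝ) := by
        rw [hcostM, h2, add_zero]
        have h5 : D.length + 1 = M.length := by simp [hMdef]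
        have h6 : D.length ≤ n := by omega
        calc CopGamble.costR q D ≤ (D.length : ℝ) := CopGamble.costR_le_length hq0 hq1 D
          _ ≤ (n : ℝ) := by exact_mod_cast h6
      calc ENNReal.ofReal (CopGamble.costR q M) ≤ ENNReal.ofReal (n : ℝ) :=
            ENNReal.ofReal_le_ofReal h4
        _ = (n : ℝ≥0∞) := ENNReal.ofReal_natCast n
    · have hvpos : 0 < q v := lt_of_le_of_ne (hq0 v) (Ne.symm hv)
      -- real-valued final computation
      have hreal : CopGamble.costR q M + CopGamble.survR q M * (q v)⁻¹ ≤ (n : ℝ) := by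
        have hdiv : CopGamble.survR q D / q v ≤ (n : ℝ) - CopGamble.costR q D := by
          rw [div_le_iff₀ hvpos]
          calc CopGamble.survR q D ≤ q v * ((n : ℝ) - CopGamble.costR q D) := hineq
            _ = ((n : ℝ) - CopGamble.costR q D) * q v := by ring
        have hexp : CopGamble.costR q M + CopGamble.survR q M * (q v)⁻¹ =
            CopGamble.costR q D + CopGamble.survR q D / q v := by
          rw [hcostM, hsurvM]
          field_simp
          ring
        rw [hexp]
        linarith
      have hpv : p v = ENNReal.ofReal (q v) := (ENNReal.ofReal_toReal (hptop v)).symm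
      rw [hpv, ← ENNReal.ofReal_inv_of_pos hvpos,
        ← ENNReal.ofReal_mul (CopGamble.survR_nonneg hq1 M),
        ← ENNReal.ofReal_add (CopGamble.costR_nonneg hq1 M)
          (mul_nonneg (CopGamble.survR_nonneg hq1 M) (by positivity))]
      calc ENNReal.ofReal (CopGamble.costR q M + CopGamble.survR q M * (q v)⁻¹)
          ≤ ENNReal.ofReal (n : ℝ) := ENNReal.ofReal_le_ofReal hreal
        _ = (n : ℝ≥0∞) := ENNReal.ofReal_natCast n
  calc ∫⁻ ω, captureTime w X ω ∂μ ≤ ∑' t : ℕ, μ (A t) := hint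
    _ = ∑' t : ℕ, ∏ i ∈ Finset.range t, (1 - p (M.getD i v)) := by
        refine tsum_congr fun t => ?_
        rw [hmeasA t, hprod t]
    _ = CopGamble.costE (fun x => p x) M + CopGamble.survE (fun x => p x) M * (p v)⁻¹ := hEsum
    _ ≤ (n : ℝ≥0∞) := hfinal
end

section
/- Let G be a connected graph on n vertices. Then both of the following quantities equal n: (i) the infimum over vertices r of the supremum over gambles p of the infimum over cop walks w with w(0) = r of E[T_w] (the cop chooses her start before the gamble is revealed); and (ii) the supremum over gambles p of the infimum over vertices r and cop walks w with w(0) = r of E[T_w] (the cop chooses her start after the gamble is revealed). (Lemma 3.3: the value of the cop vs. gambler game is n regardless of how the cop's initial position is chosen.) -/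
open MeasureTheory ProbabilityTheory
open scoped ENNReal

/-- `ν` is the law of an i.i.d. sequence of `V`-valued random variables with common
distribution `p`: the coordinate maps on the sequence space `ℕ → V` are independent,
each with law `p`.  (Any two such laws coincide.) -/
def IsIIDSeqLaw {V : Type*} [MeasurableSpace V] (p : PMF V) (ν : Measure (ℕ → V)) : Prop :=
  IsProbabilityMeasure ν ∧
    iIndepFun (fun t (x : ℕ → V) => x t) ν ∧
    ∀ t : ℕ, ν.map (fun x => x t) = p.toMeasure

/-- The expected capture time `E[T_w]` of the cop walk `w` against the gamble `p`:
the lintegral of the capture time with respect to the law of an i.i.d. sequence with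
common distribution `p` (all such laws agree, so we may take the infimum over them). -/
noncomputable def expectedCaptureTime {V : Type*} [MeasurableSpace V]
    (p : PMF V) (w : ℕ → V) : ℝ≥0∞ :=
  ⨅ (ν : Measure (ℕ → V)) (_ : IsIIDSeqLaw p ν),
    ∫⁻ x, captureTime w (fun t y => y t) x ∂ν

namespace CopGambler

variable {V : Type*}

/-- Survival probability: probability of no capture during times `1,…,t`. -/
noncomputable def surv (f : V → ℝ≥0∞) (w : ℕ → V) (t : ℕ) : ℝ≥0∞ :=
  ∏ s ∈ Finset.range t, (1 - f (w (s + 1)))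

lemma surv_zero (f : V → ℝ≥0∞) (w : ℕ → V) : surv f w 0 = 1 := by
  simp [surv]

lemma surv_succ (f : V → ℝ≥0∞) (w : ℕ → V) (t : ℕ) :
    surv f w (t + 1) = surv f w t * (1 - f (w (t + 1))) :=
  Finset.prod_range_succ _ _

lemma surv_shift (f : V → ℝ≥0∞) (w : ℕ → V) (t : ℕ) :
    surv f w (t + 1) = (1 - f (w 1)) * surv f (fun s => w (s + 1)) t := by
  rw [surv, Finset.prod_range_succ', mul_comm]
  rfl

/-- Value of the "follow `w` for `d` steps, then sit at `w d`" strategy. -/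
noncomputable def Fd (f : V → ℝ≥0∞) (w : ℕ → V) (d : ℕ) : ℝ≥0∞ :=
  (∑ t ∈ Finset.range d, surv f w t) + surv f w d * (f (w d))⁻¹

lemma Fd_succ (f : V → ℝ≥0∞) (w : ℕ → V) (d : ℕ) :
    Fd f w (d + 1) = 1 + (1 - f (w 1)) * Fd f (fun s => w (s + 1)) d := by
  set w' : ℕ → V := fun s => w (s + 1) with hw'
  have hsum : ∑ t ∈ Finset.range (d + 1), surv f w t
      = 1 + (1 - f (w 1)) * ∑ t ∈ Finset.range d, surv f w' t := by
    rw [Finset.sum_range_succ', surv_zero, Finset.mul_sum, add_comm]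
    congr 1
    exact Finset.sum_congr rfl fun t _ => surv_shift f w t
  have hlast : surv f w (d + 1) * (f (w (d + 1)))⁻¹
      = (1 - f (w 1)) * (surv f w' d * (f (w' d))⁻¹) := by
    rw [surv_shift, mul_assoc]
  rw [Fd, hsum, hlast, Fd, mul_add, add_assoc]

/-- The key inductive inequality: `q·Fd + σ ≤ d·q + 1`. -/
lemma key_ineq (f : V → ℝ≥0∞) (hf1 : ∀ v, f v ≤ 1) :
    ∀ (d : ℕ) (w : ℕ → V), f (w d) ≠ 0 →
      (∀ s, 1 ≤ s → s ≤ d → f (w s) ≤ f (w d)) →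
      f (w d) * Fd f w d + ∑ s ∈ Finset.range d, f (w (s + 1))
        ≤ (d : ℝ≥0∞) * f (w d) + 1 := by
  intro d
  induction d with
  | zero =>
    intro w hq0 _
    have hqt : f (w 0) ≠ ⊤ := ne_top_of_le_ne_top ENNReal.one_ne_top (hf1 _)
    simp [Fd, surv_zero, ENNReal.mul_inv_cancel hq0 hqt]
  | succ d ih =>
    intro w hq0 hmax
    set w' : ℕ → V := fun s => w (s + 1) with hw'
    have IH : f (w' d) * Fd f w' d + ∑ s ∈ Finset.range d, f (w' (s + 1))
        ≤ (d : ℝ≥0∞) * f (w' d) + 1 := by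
      refine ih w' hq0 fun s h1 h2 => ?_
      exact hmax (s + 1) (by omega) (by omega)
    set q := f (w (d + 1)) with hq
    set x := f (w 1) with hx
    set a := (1 : ℝ≥0∞) - x with ha
    have hax : a + x = 1 := tsub_add_cancel_of_le (hf1 _)
    set A := Fd f w' d with hA
    set σ := ∑ s ∈ Finset.range d, f (w' (s + 1)) with hσ
    have hσle : σ ≤ (d : ℝ≥0∞) * q := by
      calc σ ≤ ∑ _s ∈ Finset.range d, q := by
            refine Finset.sum_le_sum fun s hs => ?_
            simp only [Finset.mem_range] at hs
            exact hmax (s + 1 + 1) (by omega) (by omega)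
        _ = (d : ℝ≥0∞) * q := by
            rw [Finset.sum_const, Finset.card_range, nsmul_eq_mul]
    have hsum : ∑ s ∈ Finset.range (d + 1), f (w (s + 1)) = x + σ := by
      rw [Finset.sum_range_succ', add_comm]
    have hFd : Fd f w (d + 1) = 1 + a * A := Fd_succ f w d
    have step1 : a * (q * A) + σ ≤ (d : ℝ≥0∞) * q + a := by
      have hσsplit : σ = a * σ + x * σ := by
        rw [← add_mul, hax, one_mul]
      calc a * (q * A) + σ = a * (q * A + σ) + x * σ := by
            rw [mul_add, add_assoc, ← hσsplit]
        _ ≤ a * ((d : ℝ≥0∞) * q + 1) + x * ((d : ℝ≥0∞) * q) := by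
            gcongr
        _ = (a + x) * ((d : ℝ≥0∞) * q) + a := by ring
        _ = (d : ℝ≥0∞) * q + a := by rw [hax, one_mul]
    calc q * Fd f w (d + 1) + ∑ s ∈ Finset.range (d + 1), f (w (s + 1))
        = q * (1 + a * A) + (x + σ) := by rw [hFd, hsum]
      _ = q + (a * (q * A) + σ) + x := by ring
      _ ≤ q + ((d : ℝ≥0∞) * q + a) + x := by gcongr
      _ = (d : ℝ≥0∞) * q + q + (a + x) := by ring
      _ = ((d : ℕ) + 1 : ℝ≥0∞) * q + 1 := by rw [hax]; ring
      _ = ((d + 1 : ℕ) : ℝ≥0∞) * q + 1 := by norm_cast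

/-- Geometric tail: if the walk sits at `w d` from time `d` on, the series equals `Fd`. -/
lemma tsum_surv_eq_Fd (f : V → ℝ≥0∞) (w : ℕ → V) (d : ℕ)
    (hf1 : f (w d) ≤ 1) (hsit : ∀ s, d ≤ s → w s = w d) :
    ∑' t, surv f w t = Fd f w d := by
  have hpow : ∀ j, surv f w (j + d) = surv f w d * (1 - f (w d)) ^ j := by
    intro j
    induction j with
    | zero => simp
    | succ j ihj =>
      rw [show j + 1 + d = j + d + 1 by omega, surv_succ, ihj,
        hsit (j + d + 1) (by omega), pow_succ, mul_assoc]
  rw [← Summable.sum_add_tsum_nat_add' (f := fun t => surv f w t) (k := d) ENNReal.summable]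
  congr 1
  calc ∑' j, surv f w (j + d) = ∑' j, surv f w d * (1 - f (w d)) ^ j :=
        tsum_congr hpow
    _ = surv f w d * ∑' j, (1 - f (w d)) ^ j := ENNReal.tsum_mul_left
    _ = surv f w d * (f (w d))⁻¹ := by
        rw [ENNReal.tsum_geometric, ENNReal.sub_sub_cancel ENNReal.one_ne_top hf1]



lemma getVert_injOn {G : SimpleGraph V} {u v : V} (P : G.Walk u v) (hP : P.IsPath) :
    ∀ i, i ≤ P.length → ∀ j, j ≤ P.length → P.getVert i = P.getVert j → i = j := by
  induction P with
  | nil =>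
    intro i hi j hj _
    simp only [SimpleGraph.Walk.length_nil, Nat.le_zero] at hi hj
    omega
  | @cons a b c hadj q ih =>
    rw [SimpleGraph.Walk.cons_isPath_iff] at hP
    intro i hi j hj hij
    rw [SimpleGraph.Walk.length_cons] at hi hj
    match i, j with
    | 0, 0 => rfl
    | 0, (j+1) =>
      exfalso
      rw [SimpleGraph.Walk.getVert_zero, SimpleGraph.Walk.getVert_cons_succ] at hij
      exact hP.2 (SimpleGraph.Walk.mem_support_iff_exists_getVert.mpr
        ⟨j, hij.symm, by omega⟩)
    | (i+1), 0 =>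
      exfalso
      rw [SimpleGraph.Walk.getVert_zero, SimpleGraph.Walk.getVert_cons_succ] at hij
      exact hP.2 (SimpleGraph.Walk.mem_support_iff_exists_getVert.mpr
        ⟨i, hij, by omega⟩)
    | (i+1), (j+1) =>
      rw [SimpleGraph.Walk.getVert_cons_succ, SimpleGraph.Walk.getVert_cons_succ] at hij
      have := ih hP.1 i (by omega) j (by omega) hij
      omega

lemma pmf_sum_one [Fintype V] (p : PMF V) : ∑ v : V, (p v : ℝ≥0∞) = 1 := by
  rw [← tsum_fintype (L := SummationFilter.unconditional _)]
  exact p.tsum_coe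

/-- There is a vertex of maximal probability; it has mass at least `1/n`. -/
lemma exists_good_walk [Fintype V] (G : SimpleGraph V) (hG : G.Connected)
    (p : PMF V) (r : V) :
    ∃ w : ℕ → V, IsCopWalk G w ∧ w 0 = r ∧
      ∑' t, surv (fun v => p v) w t ≤ (Fintype.card V : ℝ≥0∞) := by
  haveI : Nonempty V := hG.nonempty
  haveI := Classical.decEq V
  set n := Fintype.card V with hn
  obtain ⟨vm, -, hvmax⟩ := Finset.exists_max_image Finset.univ (fun v => (p v : ℝ≥0∞))
    Finset.univ_nonempty
  have hvmax' : ∀ v : V, (p v : ℝ≥0∞) ≤ p vm := fun v => hvmax v (Finset.mem_univ v)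
  set q : ℝ≥0∞ := p vm with hqdef
  have hq1 : q ≤ 1 := p.coe_le_one vm
  have hqtop : q ≠ ⊤ := ne_top_of_le_ne_top ENNReal.one_ne_top hq1
  have hq0 : q ≠ 0 := by
    intro h0
    have : (1 : ℝ≥0∞) = 0 := by
      rw [← pmf_sum_one p]
      exact Finset.sum_eq_zero fun v _ => le_antisymm (h0 ▸ hvmax' v) zero_le
    simp at this
  -- the path
  have hrch : G.Reachable r vm := hG.preconnected r vm
  obtain ⟨P, hP⟩ : ∃ P : G.Walk r vm, P.IsPath := by
    obtain ⟨W⟩ := hrch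
    exact ⟨W.toPath.1, W.toPath.2⟩
  set d := P.length with hd
  set w : ℕ → V := fun t => P.getVert t with hw
  have hw0 : w 0 = r := P.getVert_zero
  have hwd : w d = vm := P.getVert_length
  have hcop : IsCopWalk G w := by
    intro t
    by_cases ht : t < d
    · exact Or.inr (P.adj_getVert_succ ht)
    · left
      show P.getVert (t + 1) = P.getVert t
      rw [P.getVert_of_length_le (show P.length ≤ t + 1 by omega),
        P.getVert_of_length_le (show P.length ≤ t by omega)]
  have hsit : ∀ s, d ≤ s → w s = w d := by
    intro s hs
    show P.getVert s = P.getVert d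
    rw [P.getVert_of_length_le hs, hd, P.getVert_length]
  set f : V → ℝ≥0∞ := fun v => p v with hf
  have hFeq : ∑' t, surv f w t = Fd f w d :=
    tsum_surv_eq_Fd f w d (by rw [hwd]; exact hq1) hsit
  have hkey := key_ineq f (fun v => p.coe_le_one v) d w
    (by show f (w d) ≠ 0; rw [hwd]; exact hq0)
    (fun s _ _ => by show f (w s) ≤ f (w d); rw [hwd]; exact hvmax' (w s))
  rw [hwd] at hkey
  set σ := ∑ s ∈ Finset.range d, f (w (s + 1)) with hσ
  -- mass bound
  set T : Finset V := (Finset.range d).image (fun s => w (s + 1)) with hT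
  have hinj : ∀ x ∈ Finset.range d, ∀ y ∈ Finset.range d,
      w (x + 1) = w (y + 1) → x = y := by
    intro x hx y hy hxy
    simp only [Finset.mem_range] at hx hy
    have := getVert_injOn P hP (x+1) (by omega) (y+1) (by omega) hxy
    omega
  have hTcard : T.card = d := by
    rw [hT, Finset.card_image_of_injOn hinj, Finset.card_range]
  have hdn : d ≤ n := by
    rw [← hTcard, hn]
    exact Finset.card_le_univ T
  have hTsum : ∑ v ∈ T, (p v : ℝ≥0∞) = σ := by
    rw [hT, Finset.sum_image hinj]
  have hmass : (1 : ℝ≥0∞) ≤ σ + ((n - d : ℕ) : ℝ≥0∞) * q := by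
    have hsplit : (1 : ℝ≥0∞) = ∑ v ∈ Finset.univ \ T, (p v : ℝ≥0∞) + σ := by
      rw [← hTsum, Finset.sum_sdiff (Finset.subset_univ T), pmf_sum_one]
    have hrest : ∑ v ∈ Finset.univ \ T, (p v : ℝ≥0∞) ≤ ((n - d : ℕ) : ℝ≥0∞) * q := by
      calc ∑ v ∈ Finset.univ \ T, (p v : ℝ≥0∞)
          ≤ (Finset.univ \ T).card • q :=
            Finset.sum_le_card_nsmul _ _ q fun v _ => hvmax' v
        _ = ((n - d : ℕ) : ℝ≥0∞) * q := by
            rw [Finset.card_sdiff_of_subset (Finset.subset_univ T), hTcard, nsmul_eq_mul,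
              Finset.card_univ]
    rw [hsplit]
    rw [add_comm σ _]
    gcongr
  have hσ1 : σ ≤ 1 := by
    rw [← hTsum] at *
    rw [← pmf_sum_one p]
    exact Finset.sum_le_sum_of_subset (Finset.subset_univ T)
  have hσtop : σ ≠ ⊤ := ne_top_of_le_ne_top ENNReal.one_ne_top hσ1
  -- conclude
  refine ⟨w, hcop, hw0, ?_⟩
  rw [hFeq]
  have hchain : q * Fd f w d + σ ≤ (n : ℝ≥0∞) * q + σ := by
    calc q * Fd f w d + σ ≤ (d : ℝ≥0∞) * q + 1 := hkey
      _ ≤ (d : ℝ≥0∞) * q + (σ + ((n - d : ℕ) : ℝ≥0∞) * q) := by gcongr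
      _ = ((d : ℝ≥0∞) * q + ((n - d : ℕ) : ℝ≥0∞) * q) + σ := by ring
      _ = (n : ℝ≥0∞) * q + σ := by
          rw [← add_mul]
          congr 2
          rw [← Nat.cast_add]
          congr 1
          omega
  have hqF : q * Fd f w d ≤ q * n := by
    rw [mul_comm (n : ℝ≥0∞) q] at hchain
    exact (ENNReal.add_le_add_iff_right hσtop).mp hchain
  exact (ENNReal.mul_le_mul_iff_right hq0 hqtop).mp hqF

lemma tsum_surv_uniform [Fintype V] [Nonempty V] (w : ℕ → V) :
    ∑' t, surv (fun v => (PMF.uniformOfFintype V) v) w t = (Fintype.card V : ℝ≥0∞) := by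
  have hcard : (1 : ℝ≥0∞) ≤ (Fintype.card V : ℝ≥0∞) := by
    have := Fintype.card_pos (α := V)
    exact_mod_cast this
  set u : ℝ≥0∞ := (Fintype.card V : ℝ≥0∞)⁻¹ with hu
  have hsurv : ∀ t, surv (fun v => (PMF.uniformOfFintype V) v) w t = (1 - u) ^ t := by
    intro t
    rw [surv]
    rw [Finset.prod_congr rfl fun s _ => by rw [PMF.uniformOfFintype_apply]]
    rw [Finset.prod_const, Finset.card_range]
  rw [tsum_congr hsurv, ENNReal.tsum_geometric,
    ENNReal.sub_sub_cancel ENNReal.one_ne_top (ENNReal.inv_le_one.mpr hcard), inv_inv]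

lemma tsum_surv_const (f : V → ℝ≥0∞) (v : V) (hf1 : f v ≤ 1) :
    ∑' t, surv f (fun _ => v) t = (f v)⁻¹ := by
  rw [tsum_surv_eq_Fd f (fun _ => v) 0 hf1 (fun s _ => rfl)]
  simp [Fd, surv]



lemma exists_sit {V : Type*} [Fintype V] [Nonempty V] (p : PMF V) :
    ∃ v : V, (p v)⁻¹ ≤ (Fintype.card V : ℝ≥0∞) := by
  obtain ⟨vm, -, hvmax⟩ := Finset.exists_max_image Finset.univ (fun v => (p v : ℝ≥0∞))
    Finset.univ_nonempty
  refine ⟨vm, ?_⟩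
  have h1 : (1 : ℝ≥0∞) ≤ (Fintype.card V : ℝ≥0∞) * p vm := by
    rw [← pmf_sum_one p]
    calc ∑ v : V, (p v : ℝ≥0∞) ≤ ∑ _v : V, p vm :=
          Finset.sum_le_sum fun v _ => hvmax v (Finset.mem_univ v)
      _ = (Fintype.card V : ℝ≥0∞) * p vm := by
          rw [Finset.sum_const, nsmul_eq_mul, Finset.card_univ]
  have hq0 : p vm ≠ 0 := by
    intro h0
    rw [h0, mul_zero] at h1
    simp at h1
  have hqtop : p vm ≠ ⊤ := p.apply_ne_top vm
  calc (p vm)⁻¹ = 1 * (p vm)⁻¹ := (one_mul _).symm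
    _ ≤ ((Fintype.card V : ℝ≥0∞) * p vm) * (p vm)⁻¹ := by gcongr
    _ = (Fintype.card V : ℝ≥0∞) * (p vm * (p vm)⁻¹) := by ring
    _ = (Fintype.card V : ℝ≥0∞) := by rw [ENNReal.mul_inv_cancel hq0 hqtop, mul_one]

def capSet (w : ℕ → V) (t : ℕ) : Set (ℕ → V) :=
  ⋂ s ∈ Finset.range t, (fun y : ℕ → V => y (s + 1)) ⁻¹' ({w (s + 1)}ᶜ)

lemma mem_capSet {w : ℕ → V} {t : ℕ} {y : ℕ → V} :
    y ∈ capSet w t ↔ ∀ s, s < t → y (s + 1) ≠ w (s + 1) := by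
  simp [capSet]

lemma capSet_measurable [MeasurableSpace V] [DiscreteMeasurableSpace V]
    (w : ℕ → V) (t : ℕ) : MeasurableSet (capSet w t) := by
  refine Finset.measurableSet_biInter _ fun s _ => ?_
  exact measurable_pi_apply (s + 1) (MeasurableSet.compl (measurableSet_singleton _))

lemma captureTime_eq_tsum (w : ℕ → V) (x : ℕ → V) :
    captureTime w (fun t y => y t) x
      = ∑' t, (capSet w t).indicator (1 : (ℕ → V) → ℝ≥0∞) x := by
  classical
  by_cases h : ∃ t, 1 ≤ t ∧ w t = x t
  · set m := Nat.find h with hm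
    obtain ⟨hm1, hmeq⟩ := Nat.find_spec h
    have hLHS : captureTime w (fun t y => y t) x = (m : ℝ≥0∞) := by
      refine le_antisymm (sInf_le ⟨m, hm1, hmeq, rfl⟩) (le_sInf ?_)
      rintro r ⟨t, ht1, ht2, rfl⟩
      exact_mod_cast Nat.find_min' h ⟨ht1, ht2⟩
    have hmem : ∀ t, t < m → x ∈ capSet w t := by
      intro t ht
      rw [mem_capSet]
      intro s hs hbad
      have : m ≤ s + 1 := Nat.find_min' h ⟨by omega, hbad.symm⟩
      omega
    have hnotmem : ∀ t, m ≤ t → x ∉ capSet w t := by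
      intro t ht hx
      rw [mem_capSet] at hx
      exact hx (m - 1) (by omega) (by rw [show m - 1 + 1 = m by omega]; exact hmeq.symm)
    rw [hLHS, tsum_eq_sum (s := Finset.range m) ?h₀]
    · rw [Finset.sum_congr rfl fun t ht => Set.indicator_of_mem
        (hmem t (Finset.mem_range.mp ht)) _]
      simp
    · intro t ht
      exact Set.indicator_of_notMem (hnotmem t (by simpa using ht)) _
  · push_neg at h
    have hLHS : captureTime w (fun t y => y t) x = ⊤ := by
      unfold captureTime
      refine (congrArg sInf (?_ : _ = (∅ : Set ℝ≥0∞))).trans sInf_empty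
      rw [Set.eq_empty_iff_forall_notMem]
      rintro r ⟨t, ht1, ht2, rfl⟩
      exact h t ht1 ht2
    have hRHS : ∀ t, (capSet w t).indicator (1 : (ℕ → V) → ℝ≥0∞) x = 1 := by
      intro t
      refine Set.indicator_of_mem (mem_capSet.mpr fun s hs => ?_) _
      exact fun hbad => h (s + 1) (by omega) hbad.symm
    rw [hLHS, tsum_congr hRHS, ENNReal.tsum_const_eq_top_of_ne_zero one_ne_zero]

lemma measure_capSet [MeasurableSpace V] [DiscreteMeasurableSpace V]
    (p : PMF V) (ν : Measure (ℕ → V)) (hν : IsIIDSeqLaw p ν) (w : ℕ → V) (t : ℕ) :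
    ν (capSet w t) = surv (fun v => p v) w t := by
  obtain ⟨hprob, hindep, hmarg⟩ := hν
  have hsingle : ∀ i : ℕ, ν ((fun y : ℕ → V => y i) ⁻¹' ({w i}ᶜ)) = 1 - p (w i) := by
    intro i
    rw [← Measure.map_apply (measurable_pi_apply i)
      (MeasurableSet.compl (measurableSet_singleton _)), hmarg i,
      prob_compl_eq_one_sub (measurableSet_singleton _),
      PMF.toMeasure_apply_singleton _ _ (measurableSet_singleton _)]
  have hS : capSet w t
      = ⋂ i ∈ (Finset.range t).image (fun s => s + 1),
          (fun y : ℕ → V => y i) ⁻¹' ({w i}ᶜ) := by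
    rw [capSet]
    ext y
    simp
  have := hindep.measure_inter_preimage_eq_mul
    ((Finset.range t).image (fun s => s + 1)) (sets := fun i => ({w i}ᶜ : Set V))
    (fun i _ => MeasurableSet.compl (measurableSet_singleton _))
  rw [hS, this, Finset.prod_image (fun a _ b _ hab => by omega)]
  exact Finset.prod_congr rfl fun s _ => hsingle (s + 1)

lemma lintegral_captureTime [MeasurableSpace V] [DiscreteMeasurableSpace V]
    (p : PMF V) (ν : Measure (ℕ → V)) (hν : IsIIDSeqLaw p ν) (w : ℕ → V) :
    ∫⁻ x, captureTime w (fun t y => y t) x ∂ν = ∑' t, surv (fun v => p v) w t := by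
  rw [lintegral_congr (fun x => captureTime_eq_tsum w x),
    lintegral_tsum (f := fun t => (capSet w t).indicator (1 : (ℕ → V) → ℝ≥0∞))
      fun t => (measurable_const.indicator (capSet_measurable w t)).aemeasurable]
  exact tsum_congr fun t => by
    rw [lintegral_indicator_one (capSet_measurable w t), measure_capSet p ν hν w t]


section Construction

variable {V : Type*} [Fintype V] [Nonempty V] [LinearOrder V]

/-- The real mass of a vertex. -/
noncomputable def qr (p : PMF V) (v : V) : ℝ := (p v).toReal

/-- The left endpoint of the interval associated to `v`. -/
noncomputable def cr (p : PMF V) (v : V) : ℝ :=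
  ∑ u ∈ Finset.univ.filter (fun u => u < v), qr p u

lemma qr_nonneg (p : PMF V) (v : V) : 0 ≤ qr p v := ENNReal.toReal_nonneg

lemma sum_qr (p : PMF V) : ∑ v : V, qr p v = 1 := by
  have h1 : ((1 : ℝ≥0∞)).toReal = 1 := rfl
  rw [← h1, ← pmf_sum_one p, ENNReal.toReal_sum fun v _ => p.apply_ne_top v]
  rfl

lemma cr_nonneg (p : PMF V) (v : V) : 0 ≤ cr p v :=
  Finset.sum_nonneg fun u _ => qr_nonneg p u

lemma filter_le_eq (v : V) :
    Finset.univ.filter (fun u => u ≤ v) = insert v (Finset.univ.filter (fun u => u < v)) := by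
  ext u
  simp [le_iff_lt_or_eq, or_comm, eq_comm]

lemma cr_add_qr_eq (p : PMF V) (v : V) :
    cr p v + qr p v = ∑ u ∈ Finset.univ.filter (fun u => u ≤ v), qr p u := by
  rw [filter_le_eq, Finset.sum_insert (by simp), cr, add_comm]

lemma cr_mono (p : PMF V) {u v : V} (huv : u < v) : cr p u + qr p u ≤ cr p v := by
  rw [cr_add_qr_eq]
  refine Finset.sum_le_sum_of_subset_of_nonneg ?_ fun w _ _ => qr_nonneg p w
  intro w hw
  simp only [Finset.mem_filter, Finset.mem_univ, true_and] at hw ⊢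
  exact lt_of_le_of_lt hw huv
 
lemma cr_add_qr_le_one (p : PMF V) (v : V) : cr p v + qr p v ≤ 1 := by
  rw [cr_add_qr_eq, ← sum_qr p]
  exact Finset.sum_le_sum_of_subset_of_nonneg (Finset.subset_univ _)
    fun w _ _ => qr_nonneg p w

/-- The vertex selected by a point of `[0,1)`. -/
noncomputable def sel (p : PMF V) (x : ℝ) : V :=
  if h : (Finset.univ.filter (fun v => cr p v ≤ x)).Nonempty then
    (Finset.univ.filter (fun v => cr p v ≤ x)).max' h
  else Classical.arbitrary V

lemma cr_bot (p : PMF V) : cr p (Finset.univ.min' Finset.univ_nonempty : V) = 0 := by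
  rw [cr, Finset.filter_eq_empty_iff.mpr, Finset.sum_empty]
  intro u _
  simp only [not_lt]
  exact Finset.min'_le _ _ (Finset.mem_univ u)

lemma selset_nonempty (p : PMF V) {x : ℝ} (hx : 0 ≤ x) :
    (Finset.univ.filter (fun v => cr p v ≤ x)).Nonempty := by
  refine ⟨Finset.univ.min' Finset.univ_nonempty, ?_⟩
  simp only [Finset.mem_filter, Finset.mem_univ, true_and]
  rw [cr_bot]
  exact hx

lemma sel_spec (p : PMF V) {x : ℝ} (hx0 : 0 ≤ x) (hx1 : x < 1) :
    cr p (sel p x) ≤ x ∧ x < cr p (sel p x) + qr p (sel p x) := by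
  classical
  have hS := selset_nonempty p hx0
  rw [sel, dif_pos hS]
  set m := (Finset.univ.filter (fun v => cr p v ≤ x)).max' hS with hmdef
  have hmmem := Finset.max'_mem _ hS
  have hmx : cr p m ≤ x := (Finset.mem_filter.mp hmmem).2
  refine ⟨hmx, ?_⟩
  by_contra hcon
  push_neg at hcon
  -- hcon : cr p m + qr p m ≤ x
  have hpos : 0 < ∑ u ∈ Finset.univ.filter (fun u => ¬ u ≤ m), qr p u := by
    have hsplit := Finset.sum_filter_add_sum_filter_not Finset.univ
      (fun u => u ≤ m) (qr p)
    rw [sum_qr p, ← cr_add_qr_eq] at hsplit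
    nlinarith [hsplit]
  rw [show (Finset.univ.filter (fun u => ¬ u ≤ m)) = Finset.univ.filter (fun u => m < u)
    from by ext u; simp [not_le]] at hpos
  obtain ⟨u, hu_mem, hqu⟩ : ∃ u ∈ Finset.univ.filter (fun u => m < u), 0 < qr p u := by
    by_contra hall
    push_neg at hall
    have hle : ∑ u ∈ Finset.univ.filter (fun u => m < u), qr p u ≤ 0 :=
      Finset.sum_nonpos hall
    linarith
  have hune : (Finset.univ.filter (fun u => m < u ∧ 0 < qr p u)).Nonempty := by
    refine ⟨u, Finset.mem_filter.mpr ⟨Finset.mem_univ u, ?_, hqu⟩⟩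
    exact (Finset.mem_filter.mp hu_mem).2
  set u₀ := (Finset.univ.filter (fun u => m < u ∧ 0 < qr p u)).min' hune with hu₀def
  have hu₀mem := Finset.min'_mem _ hune
  simp only [Finset.mem_filter, Finset.mem_univ, true_and] at hu₀mem
  have hcru₀ : cr p u₀ = cr p m + qr p m := by
    rw [cr, cr_add_qr_eq]
    have hsplit : Finset.univ.filter (fun w => w < u₀)
        = Finset.univ.filter (fun w => w ≤ m)
          ∪ Finset.univ.filter (fun w => m < w ∧ w < u₀) := by
      ext w
      simp only [Finset.mem_filter, Finset.mem_univ, true_and, Finset.mem_union]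
      constructor
      · intro hw
        rcases le_or_gt w m with h | h
        · exact Or.inl h
        · exact Or.inr ⟨h, hw⟩
      · rintro (h | ⟨h1, h2⟩)
        · exact lt_of_le_of_lt h hu₀mem.1
        · exact h2
    have hdisj : Disjoint (Finset.univ.filter (fun w => w ≤ m))
        (Finset.univ.filter (fun w => m < w ∧ w < u₀)) := by
      rw [Finset.disjoint_left]
      intro w hw hw'
      simp only [Finset.mem_filter, Finset.mem_univ, true_and] at hw hw'
      exact absurd hw'.1 (not_lt.mpr hw)
    rw [hsplit, Finset.sum_union hdisj]
    have hzero : ∑ w ∈ Finset.univ.filter (fun w => m < w ∧ w < u₀), qr p w = 0 := by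
      refine Finset.sum_eq_zero fun w hw => ?_
      simp only [Finset.mem_filter, Finset.mem_univ, true_and] at hw
      by_contra hne
      have hwpos : 0 < qr p w := lt_of_le_of_ne (qr_nonneg p w) (Ne.symm hne)
      have : u₀ ≤ w := Finset.min'_le _ _ (by
        simp only [Finset.mem_filter, Finset.mem_univ, true_and]
        exact ⟨hw.1, hwpos⟩)
      exact absurd hw.2 (not_lt.mpr this)
    rw [hzero, add_zero]
  have hu₀S : u₀ ∈ Finset.univ.filter (fun v => cr p v ≤ x) := by
    simp only [Finset.mem_filter, Finset.mem_univ, true_and]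
    rw [hcru₀]
    exact hcon
  have := Finset.le_max' _ u₀ hu₀S
  rw [← hmdef] at this
  exact absurd hu₀mem.1 (not_lt.mpr this)

lemma sel_unique (p : PMF V) {x : ℝ} {v : V}
    (h1 : cr p v ≤ x) (h2 : x < cr p v + qr p v) : sel p x = v := by
  classical
  have hvS : v ∈ Finset.univ.filter (fun u => cr p u ≤ x) := by
    simp only [Finset.mem_filter, Finset.mem_univ, true_and]; exact h1
  have hS : (Finset.univ.filter (fun u => cr p u ≤ x)).Nonempty := ⟨v, hvS⟩
  rw [sel, dif_pos hS]
  set m := (Finset.univ.filter (fun u => cr p u ≤ x)).max' hS with hmdef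
  have hvm : v ≤ m := Finset.le_max' _ v hvS
  rcases eq_or_lt_of_le hvm with h | h
  · exact h.symm
  · exfalso
    have hmx : cr p m ≤ x := (Finset.mem_filter.mp (Finset.max'_mem _ hS)).2
    have := cr_mono p h
    linarith

lemma sel_preimage (p : PMF V) (v : V) :
    {x : ℝ | sel p x = v} ∩ Set.Ico 0 1 = Set.Ico (cr p v) (cr p v + qr p v) := by
  ext x
  constructor
  · rintro ⟨hsel, hx0, hx1⟩
    have := sel_spec p hx0 hx1
    rw [hsel] at this
    exact ⟨this.1, this.2⟩
  · rintro ⟨h1, h2⟩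
    have hx0 : (0 : ℝ) ≤ x := le_trans (cr_nonneg p v) h1
    have hx1 : x < 1 := lt_of_lt_of_le h2 (cr_add_qr_le_one p v)
    exact ⟨sel_unique p h1 h2, hx0, hx1⟩

lemma sel_eq_iff (p : PMF V) {x : ℝ} (hx : 0 ≤ x) (v : V) :
    sel p x = v ↔ cr p v ≤ x ∧ ∀ u, v < u → x < cr p u := by
  classical
  have hS := selset_nonempty p hx
  rw [sel, dif_pos hS]
  constructor
  · rintro rfl
    have hmem := Finset.max'_mem _ hS
    refine ⟨(Finset.mem_filter.mp hmem).2, fun u hu => ?_⟩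
    by_contra hcon
    push_neg at hcon
    have : u ≤ (Finset.univ.filter (fun w => cr p w ≤ x)).max' hS :=
      Finset.le_max' _ u (Finset.mem_filter.mpr ⟨Finset.mem_univ u, hcon⟩)
    exact absurd hu (not_lt.mpr this)
  · rintro ⟨h1, h2⟩
    refine le_antisymm ?_ (Finset.le_max' _ v
      (Finset.mem_filter.mpr ⟨Finset.mem_univ v, h1⟩))
    by_contra hcon
    push_neg at hcon
    have hmem := Finset.max'_mem _ hS
    have := (Finset.mem_filter.mp hmem).2
    exact absurd this (not_le.mpr (h2 _ hcon))

lemma sel_neg (p : PMF V) {x : ℝ} (hx : x < 0) : sel p x = Classical.arbitrary V := by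
  classical
  rw [sel, dif_neg]
  rw [Finset.nonempty_iff_ne_empty, ne_eq, not_not, Finset.filter_eq_empty_iff]
  intro v _
  push_neg
  exact lt_of_lt_of_le hx (cr_nonneg p v)

variable [MeasurableSpace V] [DiscreteMeasurableSpace V]

lemma measurable_sel (p : PMF V) : Measurable (sel p) := by
  classical
  refine measurable_to_countable fun y => ?_
  set v := sel p y
  have hset : sel p ⁻¹' {v}
      = (Set.Ici (cr p v) ∩ ⋂ u ∈ Finset.univ.filter (fun u => v < u), Set.Iio (cr p u))
        ∪ (if Classical.arbitrary V = v then Set.Iio (0:ℝ) else ∅) := by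
    ext x
    by_cases hx : 0 ≤ x
    · simp only [Set.mem_preimage, Set.mem_singleton_iff, Set.mem_union, Set.mem_inter_iff,
        Set.mem_Ici, Set.mem_iInter, Finset.mem_filter, Finset.mem_univ, true_and,
        Set.mem_Iio]
      rw [sel_eq_iff p hx v]
      constructor
      · rintro ⟨h1, h2⟩
        exact Or.inl ⟨h1, fun u hu => h2 u hu⟩
      · rintro (⟨h1, h2⟩ | hbad)
        · exact ⟨h1, fun u hu => h2 u hu⟩
        · exfalso
          split at hbad
          · exact absurd hbad (not_lt.mpr hx)
          · exact hbad
    · push_neg at hx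
      simp only [Set.mem_preimage, Set.mem_singleton_iff, Set.mem_union, Set.mem_inter_iff,
        Set.mem_Ici, Set.mem_iInter, Finset.mem_filter, Finset.mem_univ, true_and,
        Set.mem_Iio]
      rw [sel_neg p hx]
      constructor
      · intro h
        right
        rw [if_pos h]
        exact hx
      · rintro (⟨h1, _⟩ | hmem)
        · exact absurd (le_trans (cr_nonneg p v) h1) (not_le.mpr hx)
        · split at hmem
          · assumption
          · exact absurd hmem (Set.notMem_empty x)
  rw [hset]
  refine MeasurableSet.union ?_ ?_
  · exact measurableSet_Ici.inter
      (Finset.measurableSet_biInter _ fun u _ => measurableSet_Iio)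
  · split
    · exact measurableSet_Iio
    · exact MeasurableSet.empty

/-- The rescaling map. -/
noncomputable def stp (p : PMF V) (x : ℝ) : ℝ := (x - cr p (sel p x)) / qr p (sel p x)

lemma measurable_stp (p : PMF V) : Measurable (stp p) := by
  have h1 : Measurable fun x => cr p (sel p x) :=
    (Measurable.of_discrete (f := cr p)).comp (measurable_sel p)
  have h2 : Measurable fun x => qr p (sel p x) :=
    (Measurable.of_discrete (f := qr p)).comp (measurable_sel p)
  exact (measurable_id.sub h1).div h2

lemma meas_cell_step (p : PMF V) (v : V) {C : Set ℝ} (hC : MeasurableSet C) :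
    (volume.restrict (Set.Ico (0:ℝ) 1)) ({x | sel p x = v} ∩ stp p ⁻¹' C)
      = p v * (volume.restrict (Set.Ico (0:ℝ) 1)) C := by
  have hmeas_sel : MeasurableSet {x | sel p x = v} := measurable_sel p (measurableSet_singleton v)
  rw [Measure.restrict_apply (hmeas_sel.inter (measurable_stp p hC)),
    Measure.restrict_apply hC]
  set c := cr p v with hc
  set q := qr p v with hq
  set g : ℝ → ℝ := fun x => (x - c) / q with hg
  have hset : ({x | sel p x = v} ∩ stp p ⁻¹' C) ∩ Set.Ico 0 1
      = Set.Ico c (c + q) ∩ g ⁻¹' C := by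
    ext x
    constructor
    · rintro ⟨⟨hsel, hstp⟩, hx01⟩
      refine ⟨?_, ?_⟩
      · rw [← sel_preimage p v]; exact ⟨hsel, hx01⟩
      · show g x ∈ C
        have : stp p x = g x := by rw [stp, hsel]
        rw [← this]; exact hstp
    · rintro ⟨hxIco, hgC⟩
      rw [← sel_preimage p v] at hxIco
      obtain ⟨hsel, hx01⟩ := hxIco
      refine ⟨⟨hsel, ?_⟩, hx01⟩
      show stp p x ∈ C
      rw [stp, hsel]
      exact hgC
  rw [hset]
  by_cases hq0 : q = 0
  · have hempty : Set.Ico c (c + q) = ∅ := by rw [hq0, add_zero, Set.Ico_self]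
    rw [hempty, Set.empty_inter, measure_empty]
    have hp0 : p v = 0 := by
      have := hq0
      rw [hq, qr, ENNReal.toReal_eq_zero_iff] at this
      rcases this with h | h
      · exact h
      · exact absurd h (p.apply_ne_top v)
    rw [hp0, zero_mul]
  · have hqpos : 0 < q := lt_of_le_of_ne (qr_nonneg p v) (Ne.symm hq0)
    have hIco : Set.Ico c (c + q) = g ⁻¹' (Set.Ico 0 1) := by
      ext x
      simp only [Set.mem_Ico, Set.mem_preimage, hg]
      constructor
      · rintro ⟨h1, h2⟩
        constructor
        · exact div_nonneg (by linarith) (le_of_lt hqpos)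
        · rw [div_lt_one hqpos]; linarith
      · rintro ⟨h1, h2⟩
        rw [div_lt_one hqpos] at h2
        rw [le_div_iff₀ hqpos, zero_mul] at h1
        constructor <;> linarith
    have hgvol : ∀ s : Set ℝ, volume (g ⁻¹' s) = ENNReal.ofReal q * volume s := by
      intro s
      have hgcomp : g = (fun x : ℝ => x * q⁻¹) ∘ (fun x : ℝ => x + (-c)) := by
        funext x
        simp [hg, div_eq_mul_inv, sub_eq_add_neg]
      rw [hgcomp, Set.preimage_comp, measure_preimage_add_right volume (-c) _,
        Real.volume_preimage_mul_right (inv_ne_zero (ne_of_gt hqpos)), inv_inv,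
        abs_of_pos hqpos]
    rw [hIco, ← Set.preimage_inter, hgvol, Set.inter_comm]
    congr 1
    rw [hq, qr, ENNReal.ofReal_toReal (p.apply_ne_top v)]

open scoped Classical in
/-- Cylinder sets for the construction. -/
def Cset (p : PMF V) (t : ℕ) (A : ℕ → Set V) : Set ℝ :=
  ⋂ s ∈ Finset.range t, (fun x => sel p ((stp p)^[s] x)) ⁻¹' (A s)

lemma mem_Cset {p : PMF V} {t : ℕ} {A : ℕ → Set V} {x : ℝ} :
    x ∈ Cset p t A ↔ ∀ s, s < t → sel p ((stp p)^[s] x) ∈ A s := by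
  simp [Cset]

lemma measurable_comp_iterate (p : PMF V) (s : ℕ) :
    Measurable fun x => sel p ((stp p)^[s] x) :=
  (measurable_sel p).comp ((measurable_stp p).iterate s)

lemma Cset_measurable (p : PMF V) (t : ℕ) (A : ℕ → Set V) :
    MeasurableSet (Cset p t A) :=
  Finset.measurableSet_biInter _ fun s _ =>
    measurable_comp_iterate p s (MeasurableSet.of_discrete)

open scoped Classical in
lemma Cset_succ (p : PMF V) (t : ℕ) (A : ℕ → Set V) :
    Cset p (t + 1) A
      = ⋃ v ∈ Finset.univ.filter (fun v => v ∈ A 0),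
          ({x | sel p x = v} ∩ stp p ⁻¹' (Cset p t (fun s => A (s + 1)))) := by
  ext x
  simp only [Set.mem_iUnion, Set.mem_inter_iff, Set.mem_setOf_eq,
    Set.mem_preimage, Finset.mem_filter, Finset.mem_univ, true_and, exists_prop]
  rw [mem_Cset]
  constructor
  · intro h
    refine ⟨sel p x, by simpa using h 0 (by omega), rfl, ?_⟩
    rw [mem_Cset]
    intro s hs
    rw [← Function.iterate_succ_apply]
    exact h (s + 1) (by omega)
  · rintro ⟨v, hv, hsel, hstp⟩ s hs
    match s with
    | 0 => simpa [hsel] using hv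
    | (s + 1) =>
      rw [Function.iterate_succ_apply]
      rw [mem_Cset] at hstp
      exact hstp s (by omega)

open scoped Classical in
lemma meas_Cset (p : PMF V) :
    ∀ (t : ℕ) (A : ℕ → Set V),
      (volume.restrict (Set.Ico (0:ℝ) 1)) (Cset p t A)
        = ∏ s ∈ Finset.range t, (∑ v ∈ Finset.univ.filter (fun v => v ∈ A s), p v) := by
  classical
  intro t
  induction t with
  | zero =>
    intro A
    have : Cset p 0 A = Set.univ := by
      ext x; simp [mem_Cset]
    rw [this, Finset.range_zero, Finset.prod_empty, Measure.restrict_apply_univ,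
      Real.volume_Ico]
    norm_num
  | succ t ih =>
    intro A
    rw [Cset_succ]
    rw [measure_biUnion_finset ?hdisj ?hmeas]
    case hdisj =>
      intro v hv v' hv' hvv'
      refine Set.disjoint_left.mpr ?_
      rintro x ⟨hx1, -⟩ ⟨hx2, -⟩
      exact hvv' (hx1.symm.trans hx2)
    case hmeas =>
      intro v _
      exact (measurable_sel p (measurableSet_singleton v)).inter
        (measurable_stp p (Cset_measurable p t _))
    have hterm : ∀ v ∈ Finset.univ.filter (fun v => v ∈ A 0),
        (volume.restrict (Set.Ico (0:ℝ) 1))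
            ({x | sel p x = v} ∩ stp p ⁻¹' (Cset p t (fun s => A (s + 1))))
          = p v * ∏ s ∈ Finset.range t,
              (∑ v ∈ Finset.univ.filter (fun v => v ∈ A (s + 1)), p v) := by
      intro v _
      rw [meas_cell_step p v (Cset_measurable p t _), ih]
    rw [Finset.sum_congr rfl hterm, ← Finset.sum_mul, Finset.prod_range_succ']
    ring

end Construction

theorem exists_iid {V : Type*} [Fintype V] [Nonempty V]
    [MeasurableSpace V] [DiscreteMeasurableSpace V] (p : PMF V) :
    ∃ ν : Measure (ℕ → V), IsIIDSeqLaw p ν := by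
  classical
  letI : LinearOrder V := LinearOrder.lift' (Fintype.equivFin V) (Equiv.injective _)
  set μ₀ : Measure ℝ := volume.restrict (Set.Ico (0:ℝ) 1) with hμ₀
  set Φ : ℝ → (ℕ → V) := fun x t => sel p ((stp p)^[t] x) with hΦdef
  have hΦ : Measurable Φ :=
    measurable_pi_lambda _ fun t => measurable_comp_iterate p t
  have hμ₀prob : IsProbabilityMeasure μ₀ := by
    constructor
    rw [hμ₀, Measure.restrict_apply_univ, Real.volume_Ico]
    norm_num
  set ν : Measure (ℕ → V) := Measure.map Φ μ₀ with hν
  have hcyl : ∀ (S : Finset ℕ) (sets : ℕ → Set V),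
      ν (⋂ i ∈ S, (fun y : ℕ → V => y i) ⁻¹' sets i)
        = ∏ i ∈ S, (∑ v ∈ Finset.univ.filter (fun v => v ∈ sets i), p v) := by
    intro S sets
    set m := S.sup id + 1 with hm
    have hSm : S ⊆ Finset.range m := by
      intro i hi
      rw [Finset.mem_range, hm]
      have := Finset.le_sup (f := id) hi
      simp only [id] at this
      omega
    set A : ℕ → Set V := fun s => if s ∈ S then sets s else Set.univ with hA
    have hpre : Φ ⁻¹' (⋂ i ∈ S, (fun y : ℕ → V => y i) ⁻¹' sets i) = Cset p m A := by
      ext x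
      simp only [Set.mem_preimage, Set.mem_iInter, mem_Cset]
      constructor
      · intro h s hs
        simp only [hA]
        by_cases hsS : s ∈ S
        · rw [if_pos hsS]; exact h s hsS
        · rw [if_neg hsS]; trivial
      · intro h i hi
        have := h i (Finset.mem_range.mp (hSm hi))
        simp only [hA] at this
        rw [if_pos hi] at this
        exact this
    have hmeasInter : MeasurableSet (⋂ i ∈ S, (fun y : ℕ → V => y i) ⁻¹' sets i) :=
      Finset.measurableSet_biInter _ fun i _ =>
        measurable_pi_apply i (MeasurableSet.of_discrete)
    rw [hν, Measure.map_apply hΦ hmeasInter, hpre, meas_Cset p m A]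
    rw [← Finset.prod_subset hSm (fun s _ hsS => by
      simp only [hA]
      simp only [if_neg hsS]
      rw [show Finset.univ.filter (fun v : V => v ∈ (Set.univ : Set V)) = Finset.univ by
        ext v; simp]
      exact pmf_sum_one p)]
    refine Finset.prod_congr rfl fun i hi => ?_
    simp only [hA]
    simp only [if_pos hi]
  have hsingle : ∀ (i : ℕ) (B : Set V),
      ν ((fun y : ℕ → V => y i) ⁻¹' B)
        = ∑ v ∈ Finset.univ.filter (fun v => v ∈ B), p v := by
    intro i B
    have := hcyl {i} (fun _ => B)
    simpa using this
  refine ⟨ν, ?_, ?_, ?_⟩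
  · exact Measure.isProbabilityMeasure_map hΦ.aemeasurable
  · rw [iIndepFun_iff_measure_inter_preimage_eq_mul]
    intro S sets _
    rw [hcyl S sets]
    exact Finset.prod_congr rfl fun i _ => (hsingle i (sets i)).symm
  · intro t
    refine Measure.ext_of_singleton fun v => ?_
    rw [Measure.map_apply (measurable_pi_apply t) (measurableSet_singleton v),
      hsingle t {v}, PMF.toMeasure_apply_singleton _ _ (measurableSet_singleton v)]
    rw [Finset.sum_filter]
    simp



lemma expectedCaptureTime_eq {V : Type*} [Fintype V] [Nonempty V]
    [MeasurableSpace V] [DiscreteMeasurableSpace V] (p : PMF V) (w : ℕ → V) :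
    expectedCaptureTime p w = ∑' t, surv (fun v => p v) w t := by
  obtain ⟨ν₀, hν₀⟩ := exists_iid p
  refine le_antisymm ?_ ?_
  · exact iInf_le_of_le ν₀
      (iInf_le_of_le hν₀ (le_of_eq (lintegral_captureTime p ν₀ hν₀ w)))
  · exact le_iInf fun ν => le_iInf fun hν =>
      (lintegral_captureTime p ν hν w).ge

end CopGambler

/-- **Lemma 3.3.**  The value of the cop vs. gambler game on a connected `n`-vertex
graph is `n` regardless of how the cop's initial position is chosen:
(i) when the cop picks her start before the gamble is revealed
(`inf_r sup_p inf_w E[T_w] = n`), and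
(ii) when she picks it after the gamble is revealed
(`sup_p inf_r inf_w E[T_w] = n`). -/
theorem cop_vs_gambler_value_initial_position
    {V : Type*} [Fintype V] [MeasurableSpace V] [DiscreteMeasurableSpace V]
    {n : ℕ} (G : SimpleGraph V) (hG : G.Connected) (hn : Fintype.card V = n) :
    (⨅ r : V, ⨆ p : PMF V, ⨅ (w : ℕ → V) (_ : IsCopWalk G w ∧ w 0 = r),
        expectedCaptureTime p w) = (n : ℝ≥0∞) ∧
    (⨆ p : PMF V, ⨅ (r : V) (w : ℕ → V) (_ : IsCopWalk G w ∧ w 0 = r),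
        expectedCaptureTime p w) = (n : ℝ≥0∞) := by
  classical
  haveI : Nonempty V := hG.nonempty
  subst hn
  have hE : ∀ (p : PMF V) (w : ℕ → V),
      expectedCaptureTime p w = ∑' t, CopGambler.surv (fun v => p v) w t :=
    fun p w => CopGambler.expectedCaptureTime_eq p w
  have hconst_walk : ∀ r : V, IsCopWalk G (fun _ => r) ∧ (fun _ : ℕ => r) 0 = r :=
    fun r => ⟨fun _ => Or.inl rfl, rfl⟩
  set U : PMF V := PMF.uniformOfFintype V with hU
  have hEU : ∀ w : ℕ → V, expectedCaptureTime U w = (Fintype.card V : ℝ≥0∞) := fun w => by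
    rw [hE, hU, CopGambler.tsum_surv_uniform]
  have hinner_uniform : ∀ r : V,
      (⨅ (w : ℕ → V) (_ : IsCopWalk G w ∧ w 0 = r), expectedCaptureTime U w)
        = (Fintype.card V : ℝ≥0∞) := by
    intro r
    refine le_antisymm ?_ ?_
    · exact iInf₂_le_of_le (fun _ => r) (hconst_walk r) (le_of_eq (hEU _))
    · exact le_iInf₂ fun w _ => (hEU w).ge
  have hinner_le : ∀ (r : V) (p : PMF V),
      (⨅ (w : ℕ → V) (_ : IsCopWalk G w ∧ w 0 = r), expectedCaptureTime p w)
        ≤ (Fintype.card V : ℝ≥0∞) := by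
    intro r p
    obtain ⟨w, hw, hw0, hle⟩ := CopGambler.exists_good_walk G hG p r
    exact iInf₂_le_of_le w ⟨hw, hw0⟩ (le_trans (le_of_eq (hE p w)) hle)
  constructor
  · have hsup : ∀ r : V,
        (⨆ p : PMF V, ⨅ (w : ℕ → V) (_ : IsCopWalk G w ∧ w 0 = r),
          expectedCaptureTime p w) = (Fintype.card V : ℝ≥0∞) := by
      intro r
      refine le_antisymm (iSup_le fun p => hinner_le r p) ?_
      exact le_iSup_of_le U (hinner_uniform r).ge
    rw [iInf_congr hsup]
    exact iInf_const
  · refine le_antisymm ?_ ?_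
    · refine iSup_le fun p => ?_
      obtain ⟨v, hv⟩ := CopGambler.exists_sit p
      refine iInf_le_of_le v (iInf₂_le_of_le (fun _ => v) (hconst_walk v) ?_)
      rw [hE, CopGambler.tsum_surv_const _ v (p.coe_le_one v)]
      exact hv
    · refine le_iSup_of_le U ?_
      exact le_iInf fun r => le_iInf₂ fun w _ => (hEU w).ge
end

section
/- Let C_n be the cycle graph on n ≥ 3 vertices and let r be any vertex. There exist two cop walks w₁, w₂ on C_n with w₁(0) = w₂(0) = r (the clockwise and counterclockwise circuits) such that for every gamble p on V(C_n), the average (E[T_{w₁}] + E[T_{w₂}])/2 of the expected capture times is at most 1 + (e/(e−1) − 1/2)·n. (The cop strategy of circling the cycle in a uniformly random direction achieves expected capture time at most ≈1.082n against every unknown gamble; proved inside Lemma 4.1.) -/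
open MeasureTheory ProbabilityTheory
open scoped ENNReal

open Finset
open Fin.NatCast
open Fin.CommRing
section Core
variable {V Ω : Type*} [MeasurableSpace V] [MeasurableSingletonClass V]
  [mΩ : MeasurableSpace Ω] {μ : Measure Ω} {p : PMF V} {w : ℕ → V} {X : ℕ → Ω → V}

lemma capture_gt_iff (w : ℕ → V) (X : ℕ → Ω → V) (ω : Ω) (t : ℕ) :
    (t : ℝ≥0∞) < captureTime w X ω ↔ ∀ s ∈ Finset.Ioc 0 t, w s ≠ X s ω := by
  constructor
  · intro h s hs he
    rw [Finset.mem_Ioc] at hs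
    have h1 : captureTime w X ω ≤ s := sInf_le ⟨s, hs.1, he, rfl⟩
    exact absurd (h.trans_le h1) (by exact_mod_cast not_lt.2 hs.2)
  · intro h
    have h1 : ((t + 1 : ℕ) : ℝ≥0∞) ≤ captureTime w X ω := by
      refine le_sInf ?_
      rintro r ⟨s, hs1, hs2, rfl⟩
      have : ¬ s ≤ t := fun hle => h s (Finset.mem_Ioc.2 ⟨hs1, hle⟩) hs2
      exact_mod_cast Nat.succ_le_of_lt (not_le.1 this)
    exact lt_of_lt_of_le (by exact_mod_cast Nat.lt_succ_self t) h1

lemma capture_set_eq (w : ℕ → V) (X : ℕ → Ω → V) (t : ℕ) :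
    {ω : Ω | (t : ℝ≥0∞) < captureTime w X ω}
      = ⋂ s ∈ Finset.Ioc 0 t, X s ⁻¹' {w s}ᶜ := by
  ext ω
  simp only [Set.mem_setOf_eq, capture_gt_iff, Set.mem_iInter, Set.mem_preimage,
    Set.mem_compl_iff, Set.mem_singleton_iff]
  exact ⟨fun h s hs he => h s hs he.symm, fun h s hs he => h s hs he.symm⟩

lemma capture_eq_tsum (w : ℕ → V) (X : ℕ → Ω → V) (ω : Ω) :
    captureTime w X ω
      = ∑' t : ℕ, if (t : ℝ≥0∞) < captureTime w X ω then (1 : ℝ≥0∞) else 0 := by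
  classical
  by_cases hA : ∃ s : ℕ, 1 ≤ s ∧ w s = X s ω
  · set m := Nat.find hA with hm
    have hcap : captureTime w X ω = m := by
      apply le_antisymm
      · exact sInf_le ⟨m, (Nat.find_spec hA).1, (Nat.find_spec hA).2, rfl⟩
      · refine le_sInf ?_
        rintro r ⟨s, hs1, hs2, rfl⟩
        exact_mod_cast Nat.find_min' hA ⟨hs1, hs2⟩
    rw [hcap]
    rw [tsum_eq_sum (s := Finset.range m) (by
      intro b hb
      rw [if_neg]
      rw [Finset.mem_range, not_lt] at hb
      exact not_lt.2 (by exact_mod_cast hb))]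
    rw [Finset.sum_congr rfl (fun b hb => if_pos (by
      rw [Finset.mem_range] at hb
      exact_mod_cast hb))]
    simp
  · have hempty : {r : ℝ≥0∞ | ∃ s : ℕ, 1 ≤ s ∧ w s = X s ω ∧ r = s} = ∅ := by
      ext r; simp only [Set.mem_setOf_eq, Set.mem_empty_iff_false, iff_false]
      rintro ⟨s, h1, h2, rfl⟩; exact hA ⟨s, h1, h2⟩
    have hcap : captureTime w X ω = ⊤ := by
      rw [captureTime, hempty, sInf_empty]
    rw [hcap]
    simp only [ENNReal.natCast_lt_top, if_true]
    exact (ENNReal.tsum_const_eq_top_of_ne_zero one_ne_zero).symm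
end Core

section Core2
variable {V Ω : Type*} [MeasurableSpace V] [MeasurableSingletonClass V]
  [mΩ : MeasurableSpace Ω] {μ : Measure Ω} {p : PMF V} {X : ℕ → Ω → V}

lemma lintegral_captureTime [IsProbabilityMeasure μ]
    (h : IsIIDWithLaw μ p X) (w : ℕ → V) :
    ∫⁻ ω, captureTime w X ω ∂μ = ∑' t : ℕ, ∏ s ∈ Finset.Ioc 0 t, (1 - p (w s)) := by
  have hmeas : ∀ t : ℕ, MeasurableSet (⋂ s ∈ Finset.Ioc 0 t, X s ⁻¹' {w s}ᶜ) :=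
    fun t => MeasurableSet.biInter (Finset.Ioc 0 t).countable_toSet
      (fun s _ => (h.2 s).1 (measurableSet_singleton (w s)).compl)
  calc ∫⁻ ω, captureTime w X ω ∂μ
      = ∫⁻ ω, ∑' t : ℕ,
          Set.indicator (⋂ s ∈ Finset.Ioc 0 t, X s ⁻¹' {w s}ᶜ) (fun _ => (1:ℝ≥0∞)) ω ∂μ := by
        refine lintegral_congr fun ω => ?_
        rw [capture_eq_tsum w X ω]
        congr 1; ext t
        by_cases hlt : (t:ℝ≥0∞) < captureTime w X ω
        · rw [if_pos hlt, Set.indicator_of_mem (by rw [← capture_set_eq]; exact hlt)]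
        · rw [if_neg hlt, Set.indicator_of_notMem (by rw [← capture_set_eq]; exact hlt)]
    _ = ∑' t : ℕ, μ (⋂ s ∈ Finset.Ioc 0 t, X s ⁻¹' {w s}ᶜ) := by
        rw [lintegral_tsum (fun t => (measurable_const.indicator (hmeas t)).aemeasurable)]
        congr 1; ext t
        exact lintegral_indicator_one (hmeas t)
    _ = ∑' t : ℕ, ∏ s ∈ Finset.Ioc 0 t, (1 - p (w s)) := by
        congr 1; ext t
        rw [h.1.measure_inter_preimage_eq_mul (Finset.Ioc 0 t)
          (sets := fun s => {w s}ᶜ) (fun i _ => (measurableSet_singleton (w i)).compl)]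
        refine Finset.prod_congr rfl fun s _ => ?_
        rw [← Measure.map_apply (h.2 s).1 (measurableSet_singleton (w s)).compl, (h.2 s).2,
          MeasureTheory.prob_compl_eq_one_sub (measurableSet_singleton (w s)),
          PMF.toMeasure_apply_singleton _ _ (measurableSet_singleton (w s))]
end Core2

section Cover
open Finset

lemma add_le_one_add_mul {a b : ℝ≥0∞} (ha : a ≤ 1) (hb : b ≤ 1) : a + b ≤ 1 + a * b := by
  have hb' : b = a * b + (1 - a) * b := by
    rw [← add_mul, add_tsub_cancel_of_le ha, one_mul]
  calc a + b = a + (a * b + (1 - a) * b) := by rw [← hb']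
    _ ≤ a + (a * b + (1 - a) * 1) := by
        gcongr
    _ = (a + (1 - a)) + a * b := by rw [mul_one]; ring
    _ = 1 + a * b := by rw [add_tsub_cancel_of_le ha]

lemma prod_cover {n : ℕ} [NeZero n] (g : Fin n → ℝ≥0∞) (hg : ∀ v, g v ≤ 1)
    (c : Fin n) (a b : ℕ) (ha : a ≤ n) (hb : b ≤ n) (hab : n + 1 ≤ a + b) :
    (∏ i ∈ range a, g (c + (i : Fin n))) * ∏ i ∈ range b, g (c - (i : Fin n))
      ≤ ∏ v, g v := by
  have hinj : ∀ m, m ≤ n → ∀ i ∈ range m, ∀ j ∈ range m,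
      (i : Fin n) = (j : Fin n) → i = j := by
    intro m hm i hi j hj hij
    rw [mem_range] at hi hj
    have : ((i : Fin n) : ℕ) = ((j : Fin n) : ℕ) := by rw [hij]
    rwa [Fin.val_cast_of_lt (lt_of_lt_of_le hi hm),
      Fin.val_cast_of_lt (lt_of_lt_of_le hj hm)] at this
  have h₁ : ∏ v ∈ (range a).image (fun i : ℕ => c + (i : Fin n)), g v
      = ∏ i ∈ range a, g (c + (i : Fin n)) :=
    Finset.prod_image (fun i hi j hj hij =>
      hinj a ha i hi j hj (add_left_cancel hij))
  have h₂ : ∏ v ∈ (range b).image (fun i : ℕ => c - (i : Fin n)), g v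
      = ∏ i ∈ range b, g (c - (i : Fin n)) :=
    Finset.prod_image (fun i hi j hj hij =>
      hinj b hb i hi j hj (by
        have := sub_right_injective hij
        exact this))
  set s₁ := (range a).image (fun i : ℕ => c + (i : Fin n))
  set s₂ := (range b).image (fun i : ℕ => c - (i : Fin n))
  have hcover : s₁ ∪ s₂ = Finset.univ := by
    refine Finset.eq_univ_of_forall fun v => ?_
    rw [Finset.mem_union]
    by_cases hd : (v - c).val < a
    · left
      refine Finset.mem_image.2 ⟨(v - c).val, mem_range.2 hd, ?_⟩
      rw [Fin.cast_val_eq_self]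
      exact add_sub_cancel c v
    · right
      push_neg at hd
      have hdn : (v - c).val < n := (v - c).isLt
      refine Finset.mem_image.2 ⟨n - (v - c).val, mem_range.2 (by omega), ?_⟩
      have : ((n - (v - c).val : ℕ) : Fin n) = - ((v - c).val : Fin n) := by
        rw [Nat.cast_sub (le_of_lt hdn), Fin.natCast_self, zero_sub]
      rw [this, Fin.cast_val_eq_self, sub_neg_eq_add]
      exact add_sub_cancel c v
  calc (∏ i ∈ range a, g (c + (i : Fin n))) * ∏ i ∈ range b, g (c - (i : Fin n))
      = (∏ v ∈ s₁, g v) * ∏ v ∈ s₂, g v := by rw [h₁, h₂]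
    _ ≤ (∏ v ∈ s₁, g v) * ∏ v ∈ s₂ \ s₁, g v := by
        refine mul_le_mul_right ?_ _
        calc ∏ v ∈ s₂, g v = (∏ v ∈ s₂ \ (s₂ ∩ s₁), g v) * ∏ v ∈ s₂ ∩ s₁, g v :=
              (Finset.prod_sdiff Finset.inter_subset_left).symm
          _ ≤ (∏ v ∈ s₂ \ (s₂ ∩ s₁), g v) * 1 :=
              mul_le_mul_right (Finset.prod_le_one (fun i _ => zero_le) (fun i _ => hg i)) _
          _ = ∏ v ∈ s₂ \ s₁, g v := by rw [mul_one, Finset.sdiff_inter_self_left]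
    _ = ∏ v ∈ s₁ ∪ s₂ \ s₁, g v :=
        (Finset.prod_union Finset.disjoint_sdiff).symm
    _ = ∏ v, g v := by rw [Finset.union_sdiff_self_eq_union, hcover]
end Cover

section Series
open Finset

lemma full_cycle_add {n : ℕ} [NeZero n] {M : Type*} [CommMonoid M] (g : Fin n → M) (c : Fin n) :
    ∏ i ∈ range n, g (c + (i : Fin n)) = ∏ v, g v := by
  rw [← Fin.prod_univ_eq_prod_range (fun i => g (c + (i : Fin n))) n]
  simp_rw [Fin.cast_val_eq_self]
  exact Equiv.prod_comp (Equiv.addLeft c) g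

lemma full_cycle_sub {n : ℕ} [NeZero n] {M : Type*} [CommMonoid M] (g : Fin n → M) (c : Fin n) :
    ∏ i ∈ range n, g (c - (i : Fin n)) = ∏ v, g v := by
  rw [← Fin.prod_univ_eq_prod_range (fun i => g (c - (i : Fin n))) n]
  simp_rw [Fin.cast_val_eq_self]
  exact Equiv.prod_comp (Equiv.subLeft c) g

lemma series_eval {n : ℕ} [NeZero n] (f : ℕ → ℝ≥0∞) (P : ℝ≥0∞)
    (hP : ∀ t, ∏ s ∈ Finset.Ioc t (t + n), f s = P) :
    ∑' t : ℕ, ∏ s ∈ Finset.Ioc 0 t, f s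
      = (∑ j ∈ range n, ∏ s ∈ Finset.Ioc 0 j, f s) * (1 - P)⁻¹ := by
  have hstep : ∀ t, ∏ s ∈ Finset.Ioc 0 (t + n), f s = (∏ s ∈ Finset.Ioc 0 t, f s) * P := by
    intro t
    rw [← Finset.prod_Ioc_consecutive f (Nat.zero_le t) (Nat.le_add_right t n), hP]
  have hSkj : ∀ k j, ∏ s ∈ Finset.Ioc 0 (k * n + j), f s
      = P ^ k * ∏ s ∈ Finset.Ioc 0 j, f s := by
    intro k
    induction k with
    | zero => simp
    | succ k ih =>
        intro j
        have h1 : (k + 1) * n + j = (k * n + j) + n := by ring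
        rw [h1, hstep, ih, pow_succ]; ring
  calc ∑' t : ℕ, ∏ s ∈ Finset.Ioc 0 t, f s
      = ∑' k : ℕ, ∑ j : Fin n, ∏ s ∈ Finset.Ioc 0 (k * n + (j : ℕ)), f s := by
        rw [← (Nat.divModEquiv n).symm.tsum_eq, ENNReal.tsum_prod']
        congr 1; ext k; rw [tsum_fintype]; rfl
    _ = ∑' k : ℕ, P ^ k * ∑ j ∈ range n, ∏ s ∈ Finset.Ioc 0 j, f s := by
        congr 1; ext k
        simp_rw [hSkj]
        rw [← Finset.mul_sum]
        congr 1
        exact Fin.sum_univ_eq_sum_range (fun j => ∏ s ∈ Finset.Ioc 0 j, f s) n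
    _ = (∑ j ∈ range n, ∏ s ∈ Finset.Ioc 0 j, f s) * (1 - P)⁻¹ := by
        rw [ENNReal.tsum_mul_right, ENNReal.tsum_geometric, mul_comm]
end Series

open Finset

noncomputable def cwWalk {n : ℕ} [NeZero n] (r : Fin n) : ℕ → Fin n :=
  fun t => r + ((t - 1 : ℕ) : Fin n)

noncomputable def ccwWalk {n : ℕ} [NeZero n] (r : Fin n) : ℕ → Fin n :=
  fun t => r - ((t - 1 : ℕ) : Fin n)

section Walks
variable {n : ℕ} [NeZero n] (g : Fin n → ℝ≥0∞) (r : Fin n)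

lemma cw_S (j : ℕ) :
    ∏ s ∈ Finset.Ioc 0 j, g (cwWalk r s) = ∏ i ∈ range j, g (r + (i : Fin n)) := by
  rw [← Finset.Icc_add_one_left_eq_Ioc, ← Finset.Ico_add_one_right_eq_Icc, Finset.prod_Ico_eq_prod_range]
  simp [cwWalk, Nat.add_sub_cancel_left]

lemma ccw_S (j : ℕ) :
    ∏ s ∈ Finset.Ioc 0 j, g (ccwWalk r s) = ∏ i ∈ range j, g (r - (i : Fin n)) := by
  rw [← Finset.Icc_add_one_left_eq_Ioc, ← Finset.Ico_add_one_right_eq_Icc, Finset.prod_Ico_eq_prod_range]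
  simp [ccwWalk, Nat.add_sub_cancel_left]

lemma cw_period (t : ℕ) :
    ∏ s ∈ Finset.Ioc t (t + n), g (cwWalk r s) = ∏ v, g v := by
  rw [← Finset.Icc_add_one_left_eq_Ioc, ← Finset.Ico_add_one_right_eq_Icc, Finset.prod_Ico_eq_prod_range]
  have h1 : ∀ i : ℕ, (t + 1 + i - 1 : ℕ) = t + i := by omega
  have h2 : (t + n + 1 - (t + 1) : ℕ) = n := by omega
  rw [h2, ← full_cycle_add g (r + (t : Fin n))]
  refine Finset.prod_congr rfl fun i _ => ?_
  simp only [cwWalk, h1]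
  push_cast
  ring_nf

lemma ccw_period (t : ℕ) :
    ∏ s ∈ Finset.Ioc t (t + n), g (ccwWalk r s) = ∏ v, g v := by
  rw [← Finset.Icc_add_one_left_eq_Ioc, ← Finset.Ico_add_one_right_eq_Icc, Finset.prod_Ico_eq_prod_range]
  have h1 : ∀ i : ℕ, (t + 1 + i - 1 : ℕ) = t + i := by omega
  have h2 : (t + n + 1 - (t + 1) : ℕ) = n := by omega
  rw [h2, ← full_cycle_sub g (r - (t : Fin n))]
  refine Finset.prod_congr rfl fun i _ => ?_
  simp only [ccwWalk, h1]
  push_cast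
  ring_nf
end Walks
lemma prod_one_sub_pmf_le {n : ℕ} [NeZero n] (p : PMF (Fin n)) :
    ∏ v, (1 - p v) ≤ ENNReal.ofReal (Real.exp 1)⁻¹ := by
  have hne : ∀ v : Fin n, p v ≠ ∞ :=
    fun v => ((p.coe_le_one v).trans_lt ENNReal.one_lt_top).ne
  have hstep : ∀ v : Fin n, (1 : ℝ≥0∞) - p v ≤ ENNReal.ofReal (Real.exp (-(p v).toReal)) := by
    intro v
    have h1 : (1 : ℝ≥0∞) - p v = ENNReal.ofReal (1 - (p v).toReal) := by
      rw [ENNReal.ofReal_sub _ ENNReal.toReal_nonneg, ENNReal.ofReal_one,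
        ENNReal.ofReal_toReal (hne v)]
    rw [h1]
    apply ENNReal.ofReal_le_ofReal
    have := Real.add_one_le_exp (-(p v).toReal)
    linarith
  have hsum : ∑ v, (p v).toReal = 1 := by
    have h1 : ∑ v, p v = 1 := by rw [← tsum_fintype (L := SummationFilter.unconditional _)]; exact p.tsum_coe
    rw [← ENNReal.toReal_sum (fun v _ => hne v)] at *
    rw [h1, ENNReal.toReal_one]
  calc ∏ v, (1 - p v) ≤ ∏ v, ENNReal.ofReal (Real.exp (-(p v).toReal)) :=
        Finset.prod_le_prod' (fun v _ => hstep v)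
    _ = ENNReal.ofReal (∏ v, Real.exp (-(p v).toReal)) :=
        (ENNReal.ofReal_prod_of_nonneg (fun v _ => (Real.exp_pos _).le)).symm
    _ = ENNReal.ofReal (Real.exp (∑ v, -(p v).toReal)) := by rw [Real.exp_sum]
    _ = ENNReal.ofReal (Real.exp 1)⁻¹ := by
        rw [← Real.exp_neg]
        congr 1
        rw [← hsum, ← Finset.sum_neg_distrib]

/-- **Cop strategy on the cycle (from Lemma 4.1).**
On the cycle `C_n` (`n ≥ 3`) with any starting vertex `r`, there are two cop walks
(the clockwise and counterclockwise circuits) starting at `r` such that for every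
gamble `p`, the average of their expected capture times is at most
`1 + (e/(e-1) - 1/2) * n ≈ 1.082 n`. -/
theorem cycle_random_direction_strategy
    {n : ℕ} (hn : 3 ≤ n) (r : Fin n) :
    ∃ w₁ w₂ : ℕ → Fin n,
      IsCopWalk (SimpleGraph.cycleGraph n) w₁ ∧ IsCopWalk (SimpleGraph.cycleGraph n) w₂ ∧
      w₁ 0 = r ∧ w₂ 0 = r ∧
      ∀ p : PMF (Fin n),
        ∀ (Ω : Type*) (_ : MeasurableSpace Ω) (μ : Measure Ω), IsProbabilityMeasure μ →
          ∀ X : ℕ → Ω → Fin n, IsIIDWithLaw μ p X →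
            ((∫⁻ ω, captureTime w₁ X ω ∂μ) + ∫⁻ ω, captureTime w₂ X ω ∂μ) / 2 ≤
              1 + ENNReal.ofReal (Real.exp 1 / (Real.exp 1 - 1) - 1 / 2) * (n : ℝ≥0∞) := by
  obtain ⟨m, rfl⟩ : ∃ m, n = m + 3 := ⟨n - 3, by omega⟩
  haveI : NeZero (m + 3) := ⟨by omega⟩
  refine ⟨cwWalk r, ccwWalk r, ?_, ?_, ?_, ?_, ?_⟩
  · intro t
    match t with
    | 0 => left; simp [cwWalk]
    | (s + 1) =>
      right
      rw [SimpleGraph.cycleGraph_adj']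
      right
      have h1 : (s + 1 + 1 - 1 : ℕ) = s + 1 := rfl
      have h2 : (s + 1 - 1 : ℕ) = s := rfl
      simp only [cwWalk, h1, h2]
      have h3 : (r + ((s + 1 : ℕ) : Fin (m + 3))) - (r + ((s : ℕ) : Fin (m + 3))) = 1 := by
        push_cast; ring
      rw [h3]
      exact Fin.val_one (m + 1)
  · intro t
    match t with
    | 0 => left; simp [ccwWalk]
    | (s + 1) =>
      right
      rw [SimpleGraph.cycleGraph_adj']
      left
      have h1 : (s + 1 + 1 - 1 : ℕ) = s + 1 := rfl
      have h2 : (s + 1 - 1 : ℕ) = s := rfl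
      simp only [ccwWalk, h1, h2]
      have h3 : (r - ((s : ℕ) : Fin (m + 3))) - (r - ((s + 1 : ℕ) : Fin (m + 3))) = 1 := by
        push_cast; ring
      rw [h3]
      exact Fin.val_one (m + 1)
  · simp [cwWalk]
  · simp [ccwWalk]
  intro p Ω mΩ μ hμ X hX
  haveI := hμ
  set E := Real.exp 1 with hE
  have hE2 : (2.7182818283 : ℝ) < E := Real.exp_one_gt_d9
  have hE3 : E < 2.7182818286 := Real.exp_one_lt_d9
  set C := ENNReal.ofReal (E / (E - 1) - 1 / 2) with hC
  set g : Fin (m + 3) → ℝ≥0∞ := fun v => 1 - p v with hg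
  set P := ∏ v, g v with hP
  have hg1 : ∀ v, g v ≤ 1 := fun v => tsub_le_self
  -- the integrals
  rw [lintegral_captureTime hX (cwWalk r), lintegral_captureTime hX (ccwWalk r)]
  have hser1 : ∑' t : ℕ, ∏ s ∈ Finset.Ioc 0 t, (1 - p (cwWalk r s))
      = (∑ j ∈ range (m + 3), ∏ s ∈ Finset.Ioc 0 j, g (cwWalk r s)) * (1 - P)⁻¹ :=
    series_eval (fun s => g (cwWalk r s)) P (fun t => cw_period g r t)
  have hser2 : ∑' t : ℕ, ∏ s ∈ Finset.Ioc 0 t, (1 - p (ccwWalk r s))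
      = (∑ j ∈ range (m + 3), ∏ s ∈ Finset.Ioc 0 j, g (ccwWalk r s)) * (1 - P)⁻¹ :=
    series_eval (fun s => g (ccwWalk r s)) P (fun t => ccw_period g r t)
  rw [hser1, hser2, ← add_mul]
  set A := ∑ j ∈ range (m + 3), ∏ s ∈ Finset.Ioc 0 j, g (cwWalk r s) with hA
  set B := ∑ j ∈ range (m + 3), ∏ s ∈ Finset.Ioc 0 j, g (ccwWalk r s) with hB
  -- P bound
  have hPle : P ≤ ENNReal.ofReal E⁻¹ := prod_one_sub_pmf_le p
  have hPlt1 : P < 1 := by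
    refine lt_of_le_of_lt hPle ?_
    rw [ENNReal.ofReal_lt_one]
    rw [inv_lt_one_iff₀]
    right; linarith
  have hP1 : P ≤ 1 := hPlt1.le
  -- pair bound
  have hpair : ∀ j ∈ Finset.Ico 2 (m + 3),
      (∏ s ∈ Finset.Ioc 0 j, g (cwWalk r s))
        + (∏ s ∈ Finset.Ioc 0 (m + 4 - j), g (ccwWalk r s)) ≤ 1 + P := by
    intro j hj
    rw [Finset.mem_Ico] at hj
    rw [cw_S, ccw_S]
    refine le_trans (add_le_one_add_mul
      (Finset.prod_le_one (fun i _ => zero_le) (fun i _ => hg1 _))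
      (Finset.prod_le_one (fun i _ => zero_le) (fun i _ => hg1 _))) ?_
    refine add_le_add_right ?_ 1
    exact prod_cover g hg1 r j (m + 4 - j) (by omega) (by omega) (by omega)
  -- decompose sums
  have hsplit : ∀ f : ℕ → ℝ≥0∞, ∑ j ∈ range (m + 3), f j
      = f 0 + f 1 + ∑ j ∈ Finset.Ico 2 (m + 3), f j := by
    intro f
    rw [Finset.range_eq_Ico, Finset.sum_eq_sum_Ico_succ_bot (by omega),
      Finset.sum_eq_sum_Ico_succ_bot (by omega)]
    norm_num [add_assoc]
  have hBre : ∑ j ∈ Finset.Ico 2 (m + 3), ∏ s ∈ Finset.Ioc 0 j, g (ccwWalk r s)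
      = ∑ j ∈ Finset.Ico 2 (m + 3), ∏ s ∈ Finset.Ioc 0 (m + 4 - j), g (ccwWalk r s) := by
    refine Finset.sum_nbij' (fun j => m + 4 - j) (fun j => m + 4 - j) ?_ ?_ ?_ ?_ ?_
    · intro a ha; rw [Finset.mem_Ico] at ha ⊢; omega
    · intro a ha; rw [Finset.mem_Ico] at ha ⊢; omega
    · intro a ha; rw [Finset.mem_Ico] at ha; omega
    · intro a ha; rw [Finset.mem_Ico] at ha; omega
    · intro a ha; rw [Finset.mem_Ico] at ha
      congr 2
      omega
  have hS0 : ∀ w : ℕ → Fin (m + 3), ∏ s ∈ Finset.Ioc 0 0, g (w s) = 1 := by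
    intro w; simp
  have hS1 : ∀ w : ℕ → Fin (m + 3), ∏ s ∈ Finset.Ioc 0 1, g (w s) ≤ 1 := by
    intro w; exact Finset.prod_le_one (fun i _ => zero_le) (fun i _ => hg1 _)
  have hsum : A + B ≤ 4 + ((m : ℝ≥0∞) + 1) * (1 + P) := by
    rw [hA, hB, hsplit, hsplit (fun j => ∏ s ∈ Finset.Ioc 0 j, g (ccwWalk r s)), hBre]
    rw [hS0, hS0]
    calc 1 + ∏ s ∈ Finset.Ioc 0 1, g (cwWalk r s)
          + ∑ j ∈ Finset.Ico 2 (m + 3), ∏ s ∈ Finset.Ioc 0 j, g (cwWalk r s)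
          + (1 + ∏ s ∈ Finset.Ioc 0 1, g (ccwWalk r s)
          + ∑ j ∈ Finset.Ico 2 (m + 3), ∏ s ∈ Finset.Ioc 0 (m + 4 - j), g (ccwWalk r s))
        ≤ 1 + 1 + (1 + 1)
          + (∑ j ∈ Finset.Ico 2 (m + 3), (∏ s ∈ Finset.Ioc 0 j, g (cwWalk r s)
              + ∏ s ∈ Finset.Ioc 0 (m + 4 - j), g (ccwWalk r s))) := by
          rw [Finset.sum_add_distrib]
          have h1 := hS1 (cwWalk r)
          have h2 := hS1 (ccwWalk r)
          calc 1 + ∏ s ∈ Finset.Ioc 0 1, g (cwWalk r s)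
              + ∑ j ∈ Finset.Ico 2 (m + 3), ∏ s ∈ Finset.Ioc 0 j, g (cwWalk r s)
              + (1 + ∏ s ∈ Finset.Ioc 0 1, g (ccwWalk r s)
              + ∑ j ∈ Finset.Ico 2 (m + 3), ∏ s ∈ Finset.Ioc 0 (m + 4 - j), g (ccwWalk r s))
              ≤ 1 + 1
              + ∑ j ∈ Finset.Ico 2 (m + 3), ∏ s ∈ Finset.Ioc 0 j, g (cwWalk r s)
              + (1 + 1
              + ∑ j ∈ Finset.Ico 2 (m + 3), ∏ s ∈ Finset.Ioc 0 (m + 4 - j), g (ccwWalk r s)) := by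
                gcongr
            _ = 1 + 1 + (1 + 1)
              + (∑ j ∈ Finset.Ico 2 (m + 3), ∏ s ∈ Finset.Ioc 0 j, g (cwWalk r s)
              + ∑ j ∈ Finset.Ico 2 (m + 3), ∏ s ∈ Finset.Ioc 0 (m + 4 - j), g (ccwWalk r s)) := by
                ring
      _ ≤ 1 + 1 + (1 + 1) + ∑ j ∈ Finset.Ico 2 (m + 3), (1 + P) :=
          add_le_add_right (Finset.sum_le_sum hpair) _
      _ = 4 + ((m : ℝ≥0∞) + 1) * (1 + P) := by
          rw [Finset.sum_const, Nat.card_Ico, show m + 3 - 2 = m + 1 by omega, nsmul_eq_mul]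
          push_cast
          ring
  -- final arithmetic
  have hone_sub_ne : (1 : ℝ≥0∞) - P ≠ 0 := by
    simp only [ne_eq, tsub_eq_zero_iff_le, not_le]
    exact hPlt1
  have hone_sub_top : (1 : ℝ≥0∞) - P ≠ ⊤ :=
    (lt_of_le_of_lt tsub_le_self ENNReal.one_lt_top).ne
  rw [ENNReal.div_le_iff (by norm_num) (by norm_num)]
  have hz : (1 + C * ((m : ℝ≥0∞) + 3)) * 2 = 2 + 2 * C * ((m : ℝ≥0∞) + 3) := by ring
  rw [show ((m + 3 : ℕ) : ℝ≥0∞) = (m : ℝ≥0∞) + 3 by push_cast; ring, hz]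
  set z := 2 + 2 * C * ((m : ℝ≥0∞) + 3) with hzdef
  calc (A + B) * (1 - P)⁻¹
      ≤ (4 + ((m : ℝ≥0∞) + 1) * (1 + P)) * (1 - P)⁻¹ := by gcongr
    _ ≤ z := by
        have hE0 : E ≠ 0 := by linarith
        have hE1 : E - 1 ≠ 0 := by linarith
        have hE1' : (0:ℝ) < E - 1 := by linarith
        set D := ENNReal.ofReal (2 / (E - 1)) with hD
        have h2C : 2 * C = D + 1 := by
          rw [show (2:ℝ≥0∞) = ENNReal.ofReal 2 by norm_num, hC, hD,
            ← ENNReal.ofReal_mul (by norm_num : (0:ℝ) ≤ 2), ← ENNReal.ofReal_one,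
            ← ENNReal.ofReal_add (div_nonneg (by norm_num) hE1'.le) (by norm_num)]
          congr 1
          field_simp
          ring
        have hkey : (1 + 2 * C) * P ≤ D := by
          rw [h2C]
          have h1 : (1:ℝ≥0∞) + (D + 1) = ENNReal.ofReal (2 + 2 / (E - 1)) := by
            rw [hD, ← ENNReal.ofReal_one,
              ← ENNReal.ofReal_add (div_nonneg (by norm_num) hE1'.le) (by norm_num),
              ← ENNReal.ofReal_add (by norm_num) (by positivity)]
            congr 1
            ring
          calc (1 + (D + 1)) * P
              ≤ ENNReal.ofReal (2 + 2 / (E - 1)) * ENNReal.ofReal E⁻¹ := by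
                rw [h1]; exact mul_le_mul_right hPle _
            _ = ENNReal.ofReal ((2 + 2 / (E - 1)) * E⁻¹) :=
                (ENNReal.ofReal_mul (by positivity)).symm
            _ = D := by
                rw [hD]; congr 1; field_simp; ring
        rw [← div_eq_mul_inv, ENNReal.div_le_iff hone_sub_ne hone_sub_top]
        have h5 : z - z * P ≤ z * (1 - P) := by
          rw [tsub_le_iff_right, ← mul_add, tsub_add_cancel_of_le hP1, mul_one]
        have hztop : z * P ≠ ∞ := by
          rw [hzdef, hC]
          exact ENNReal.mul_ne_top (by finiteness) (ne_top_of_le_ne_top ENNReal.one_ne_top hP1)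
        refine le_trans (ENNReal.le_sub_of_add_le_right hztop ?_) h5
        calc 4 + ((m : ℝ≥0∞) + 1) * (1 + P) + z * P
            = ((m : ℝ≥0∞) + 5) + ((1 + 2 * C) * P) * ((m : ℝ≥0∞) + 3) := by
              rw [hzdef]; ring
          _ ≤ ((m : ℝ≥0∞) + 5) + D * ((m : ℝ≥0∞) + 3) := by
              exact add_le_add le_rfl (mul_le_mul_left hkey _)
          _ = z := by rw [hzdef, h2C]; ring
end

section
/- There exists N such that for all n ≥ N the following holds on the star K_{1,n−1} (center c, leaves ℓ_1,…,ℓ_{n−1}): for every randomized cop strategy, i.e., every probability measure σ on the space of cop walks on K_{1,n−1} (with the product sigma-algebra, independent of the gambler's randomness), at least one of the following two expected capture times exceeds n: (a) against the random sitter — a leaf L chosen uniformly at random, with capture time inf{t ≥ 1 : w(t) = L} — the expectation over σ and L; (b) against the gamble uniform on the n−1 leaves — the expectation over σ and the i.i.d. gambler positions. (Lemma 4.2: the unknown gambler is strictly stronger than the known gambler on K_{1,n−1}.) -/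
open MeasureTheory ProbabilityTheory
open scoped ENNReal

/-- The hitting time `inf {t ≥ 1 : w t = u}` of a fixed target vertex `u` by the walk
`w`, valued in `[0, ∞]`. -/
noncomputable def hitTime {V : Type*} (w : ℕ → V) (u : V) : ℝ≥0∞ :=
  sInf {r : ℝ≥0∞ | ∃ t : ℕ, 1 ≤ t ∧ w t = u ∧ r = t}

/-! ### Auxiliary arithmetic lemmas -/

lemma pow_bound_nat (m : ℕ) (hm : 1 ≤ m) : ∀ k : ℕ, m ^ k * (m - k) ≤ (m - 1) ^ k * m := by
  intro k
  induction k with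
  | zero => simp
  | succ k ih =>
    have key : m * (m - (k+1)) ≤ (m - k) * (m - 1) := by
      rcases le_or_gt m k with h | h
      · simp [Nat.sub_eq_zero_of_le (le_trans h (Nat.le_succ k)), Nat.sub_eq_zero_of_le h]
      · obtain ⟨a, rfl⟩ : ∃ a, m = a + k + 1 := ⟨m - k - 1, by omega⟩
        simp only [show a + k + 1 - (k+1) = a by omega, show a + k + 1 - k = a + 1 by omega,
          show a + k + 1 - 1 = a + k by omega]
        nlinarith
    calc m ^ (k+1) * (m - (k+1)) = m ^ k * (m * (m - (k+1))) := by ring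
      _ ≤ m ^ k * ((m - k) * (m - 1)) := Nat.mul_le_mul_left _ key
      _ = (m ^ k * (m - k)) * (m - 1) := by ring
      _ ≤ ((m - 1) ^ k * m) * (m - 1) := Nat.mul_le_mul_right _ ih
      _ = (m - 1) ^ (k+1) * m := by ring

lemma pow_bound_sq (m : ℕ) (hm : 1 ≤ m) (x : ℕ) :
    (2*m - (x+1))^2 * m ^ x ≤ 4 * m^2 * (m-1)^x := by
  set k := (x+1)/2 with hk
  have h2k : x ≤ 2*k ∧ 2*k ≤ x + 1 := by omega
  have h1 : 2*m - (x+1) ≤ 2*(m - k) := by omega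
  have hC1 : m ^ k * (m - k) ≤ (m - 1) ^ k * m := pow_bound_nat m hm k
  have hsq : (m ^ k * (m - k))^2 ≤ ((m - 1) ^ k * m)^2 := Nat.pow_le_pow_left hC1 2
  have h3 : (m - k)^2 * m ^ (2*k) ≤ m^2 * (m-1)^(2*k) := by
    calc (m - k)^2 * m ^ (2*k) = (m ^ k * (m - k))^2 := by ring
      _ ≤ ((m - 1) ^ k * m)^2 := hsq
      _ = m^2 * (m-1)^(2*k) := by ring
  have hcancel : ∀ a b c : ℕ, 1 ≤ c → a * c ≤ b * c → a ≤ b := by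
    intro a b c hc h
    exact Nat.le_of_mul_le_mul_right h hc
  apply hcancel _ _ (m ^ (2*k - x)) (Nat.one_le_pow _ _ hm)
  calc (2*m - (x+1))^2 * m ^ x * m ^ (2*k - x)
      = (2*m - (x+1))^2 * m ^ (2*k) := by rw [mul_assoc, ← pow_add]; congr 2; omega
    _ ≤ (2*(m-k))^2 * m ^ (2*k) := Nat.mul_le_mul_right _ (Nat.pow_le_pow_left h1 2)
    _ = 4 * ((m-k)^2 * m ^ (2*k)) := by ring
    _ ≤ 4 * (m^2 * (m-1)^(2*k)) := Nat.mul_le_mul_left _ h3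
    _ = 4 * (m^2 * ((m-1)^x * (m-1)^(2*k - x))) := by
        rw [← pow_add]; congr 3; omega
    _ = (4 * m^2 * (m-1)^x) * (m-1)^(2*k - x) := by ring
    _ ≤ (4 * m^2 * (m-1)^x) * m ^ (2*k - x) :=
        Nat.mul_le_mul_left _ (Nat.pow_le_pow_left (by omega) _)

lemma per_t_bound (m t D x y : ℤ) (hm : 45 ≤ m) (ht0 : 0 ≤ t) (ht : t ≤ 2*m - 1)
    (hD0 : 0 ≤ D) (hx0 : 0 ≤ x) (hDx : D ≤ x) (hDxt : D + x ≤ t + 1) (hDm : D ≤ m)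
    (hy0 : 0 ≤ y) (hy1 : 2*m - 1 - x ≤ y) (hy2 : y = 0 ∨ y = 2*m-1-x) :
    32*m^2 - 16*m*t - 40*m + (t-1)^2 ≤ 16*m*(m - D) + 4*y^2 := by
  rcases hy2 with h0 | hcase
  · have hx : 2*m - 1 ≤ x := by omega
    have ht2 : 2*m - 2 ≤ t := by omega
    have hD1 : D ≤ 1 := by omega
    nlinarith [sq_nonneg (t - 2*m + 1), sq_nonneg (t-1)]
  · subst hcase
    rcases le_or_gt (2*x) (t+1) with hc | hc
    · have h1 : 16*m*(m - x) + 4*(2*m-1-x)^2 ≤ 16*m*(m-D) + 4*(2*m-1-x)^2 := by nlinarith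
      nlinarith [mul_nonneg (sub_nonneg.2 hc) (by omega : (0:ℤ) ≤ 2*m - 2*x), sq_nonneg (t+1-2*x)]
    · have hD' : D ≤ t + 1 - x := by omega
      have h1 : 16*m*(m - (t+1-x)) + 4*(2*m-1-x)^2 ≤ 16*m*(m-D) + 4*(2*m-1-x)^2 := by nlinarith
      nlinarith [sq_nonneg (2*x - t - 1),
        mul_nonneg (by omega : (0:ℤ) ≤ 2*x - t - 1) (by omega : (0:ℤ) ≤ x)]

lemma sum_range_id_int (K : ℕ) : 2 * ∑ i ∈ Finset.range K, (i:ℤ) = K*(K-1) := by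
  induction K with
  | zero => simp
  | succ K ih =>
    rw [Finset.sum_range_succ]; push_cast; push_cast at ih; ring_nf; ring_nf at ih; linarith

lemma sum_range_sq_int (K : ℕ) : 6 * ∑ i ∈ Finset.range K, (i:ℤ)^2 = K*(K-1)*(2*K-1) := by
  induction K with
  | zero => simp
  | succ K ih =>
    rw [Finset.sum_range_succ]; push_cast; push_cast at ih; ring_nf; ring_nf at ih; linarith

lemma rhs_sum_bound (m : ℕ) (hm : 45 ≤ m) :
    (16*(m:ℤ)^2*(2*m+3)) ≤ ∑ t ∈ Finset.range (2*m), (32*(m:ℤ)^2 - 16*m*t - 40*m + (t-1)^2) := by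
  have h1 := sum_range_id_int (2*m)
  have h2 := sum_range_sq_int (2*m)
  have e1 : ∑ i ∈ Finset.range (2*m), (i:ℤ) = 2*(m:ℤ)^2 - m := by push_cast at h1; linarith
  have e2 : 6 * ∑ i ∈ Finset.range (2*m), (i:ℤ)^2 = 16*(m:ℤ)^3 - 12*m^2 + 2*m := by
    push_cast at h2; linarith
  have hexp : ∀ t : ℕ, (32*(m:ℤ)^2 - 16*m*t - 40*m + ((t:ℤ)-1)^2)
      = (32*(m:ℤ)^2 - 40*m + 1) + (-16*(m:ℤ)-2)*t + (t:ℤ)^2 := fun t => by ring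
  simp_rw [hexp]
  rw [Finset.sum_add_distrib, Finset.sum_add_distrib, Finset.sum_const, Finset.card_range,
    ← Finset.mul_sum, e1]
  have hm' : (45:ℤ) ≤ m := by exact_mod_cast hm
  simp only [nsmul_eq_mul]
  push_cast
  nlinarith [e2, hm',
    mul_nonneg (mul_nonneg (sub_nonneg.2 hm') (Int.natCast_nonneg m)) (Int.natCast_nonneg m)]

lemma core_sum (m : ℕ) (hm : 45 ≤ m) (Df Nf : ℕ → ℕ)
    (h1 : ∀ t, t < 2*m → Df t ≤ Nf t) (h2 : ∀ t, t < 2*m → Df t + Nf t ≤ t + 1)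
    (h3 : ∀ t, Df t ≤ m) :
    4*m^2*(2*m+3) ≤ 4*m*(∑ t ∈ Finset.range (2*m), (m - Df t))
      + ∑ t ∈ Finset.range (2*m), (2*m - (Nf t + 1))^2 := by
  have key : ∀ t ∈ Finset.range (2*m),
      (32*(m:ℤ)^2 - 16*m*t - 40*m + ((t:ℤ)-1)^2)
        ≤ 16*(m:ℤ)*(((m - Df t : ℕ)):ℤ) + 4*(((2*m - (Nf t + 1) : ℕ)):ℤ)^2 := by
    intro t ht
    rw [Finset.mem_range] at ht
    have hm' : (45:ℤ) ≤ m := by exact_mod_cast hm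
    have hc1 : ((m - Df t : ℕ):ℤ) = (m:ℤ) - Df t := by
      have := h3 t; omega
    rw [hc1]
    exact per_t_bound m t (Df t) (Nf t) _ hm' (by omega) (by omega) (by omega) (by omega)
      (by exact_mod_cast h1 t ht) (by exact_mod_cast h2 t ht) (by exact_mod_cast h3 t)
      (by omega) (by omega) (by omega)
  have hsum := Finset.sum_le_sum key
  have hrhs := rhs_sum_bound m hm
  have hInt : (16:ℤ)*m^2*(2*m+3)
      ≤ 16*(m:ℤ)*(∑ t ∈ Finset.range (2*m), ((m - Df t : ℕ):ℤ))
        + 4*(∑ t ∈ Finset.range (2*m), ((2*m - (Nf t + 1) : ℕ):ℤ)^2) := by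
    calc (16:ℤ)*m^2*(2*m+3) ≤ _ := hrhs
      _ ≤ _ := hsum
      _ = _ := by rw [Finset.mul_sum, Finset.mul_sum, ← Finset.sum_add_distrib]
  have c1 : (∑ t ∈ Finset.range (2*m), ((m - Df t : ℕ):ℤ))
      = ((∑ t ∈ Finset.range (2*m), (m - Df t) : ℕ) : ℤ) := by push_cast; rfl
  have c2 : (∑ t ∈ Finset.range (2*m), ((2*m - (Nf t + 1) : ℕ):ℤ)^2)
      = ((∑ t ∈ Finset.range (2*m), (2*m - (Nf t + 1))^2 : ℕ) : ℤ) := by push_cast; rfl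
  rw [c1, c2] at hInt
  zify
  nlinarith [hInt]

/-! ### Counting and infima -/

def badCount (Q : ℕ → Prop) [DecidablePred Q] (S : ℕ) : ℕ :=
  (@Finset.filter ℕ (fun s => ∀ t ∈ Finset.Icc 1 s, ¬ Q t)
    (fun _ => Finset.decidableDforallFinset) (Finset.range S)).card

lemma count_le_sInf (Q : ℕ → Prop) [DecidablePred Q] (S : ℕ) :
    (badCount Q S : ℝ≥0∞)
      ≤ sInf {r : ℝ≥0∞ | ∃ t : ℕ, 1 ≤ t ∧ Q t ∧ r = (t : ℝ≥0∞)} := by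
  apply le_sInf
  rintro r ⟨t, ht1, hQ, rfl⟩
  rw [Nat.cast_le]
  apply le_trans (Finset.card_le_card (t := Finset.range t) ?_) (le_of_eq (Finset.card_range t))
  intro s hs
  rw [Finset.mem_filter] at hs
  rw [Finset.mem_range]
  by_contra hc
  exact hs.2 t (Finset.mem_Icc.2 ⟨ht1, by omega⟩) hQ

lemma ennreal_div_pow (a b : ℝ≥0∞) (n : ℕ) : (a/b)^n = a^n / b^n := by
  rw [div_eq_mul_inv, mul_pow, ← ENNReal.inv_pow, ← div_eq_mul_inv]

/-! ### Walks on the star -/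

section Graph
variable {k : ℕ} (w : ℕ → Unit ⊕ Fin k)

def NtF (t : ℕ) : ℕ := ((Finset.Icc 1 t).filter (fun s => (w s).isRight)).card

def Dfin (t : ℕ) : Finset (Fin k) :=
  @Finset.filter (Fin k) (fun i => ∃ s ∈ Finset.Icc 1 t, w s = Sum.inr i)
    (fun _ => Finset.decidableExistsAndFinset) Finset.univ

def DtF (t : ℕ) : ℕ := (Dfin w t).card

lemma mem_Dfin {t : ℕ} {i : Fin k} :
    i ∈ Dfin w t ↔ ∃ s, 1 ≤ s ∧ s ≤ t ∧ w s = Sum.inr i := by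
  rw [Dfin, Finset.mem_filter]
  simp [Finset.mem_Icc, and_assoc]

lemma NtF_le (t : ℕ) : NtF w t ≤ t := by
  calc NtF w t ≤ (Finset.Icc 1 t).card := Finset.card_filter_le _ _
    _ = t := by rw [Nat.card_Icc]; omega

lemma DtF_le (t : ℕ) : DtF w t ≤ k := by
  calc DtF w t ≤ (Finset.univ : Finset (Fin k)).card :=
        Finset.card_le_card (Finset.filter_subset _ _)
    _ = k := by simp

variable (hw : IsCopWalk (completeBipartiteGraph Unit (Fin k)) w)

include hw in
lemma walk_step (s : ℕ) (i : Fin k) (h : w (s+1) = Sum.inr i) :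
    w s = Sum.inr i ∨ w s = Sum.inl () := by
  rcases hw s with he | ha
  · left; rw [← he, h]
  · rw [h] at ha
    simp only [completeBipartiteGraph_adj] at ha
    rcases ha with ⟨hl, _⟩ | ⟨_, hr⟩
    · right
      rcases hv : w s with u | j
      · rfl
      · rw [hv] at hl; simp at hl
    · simp at hr

open Classical in
noncomputable def fvis (t : ℕ) (i : Fin k) : ℕ :=
  if h : ∃ s, 1 ≤ s ∧ s ≤ t ∧ w s = Sum.inr i then Nat.find h else 0

lemma fvis_spec {t : ℕ} {i : Fin k}
    (h : ∃ s, 1 ≤ s ∧ s ≤ t ∧ w s = Sum.inr i) :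
    1 ≤ fvis w t i ∧ fvis w t i ≤ t ∧ w (fvis w t i) = Sum.inr i := by
  rw [fvis, dif_pos h]
  exact Nat.find_spec h

lemma fvis_min {t : ℕ} {i : Fin k}
    (h : ∃ s, 1 ≤ s ∧ s ≤ t ∧ w s = Sum.inr i) {s : ℕ}
    (hs : s < fvis w t i) : ¬ (1 ≤ s ∧ s ≤ t ∧ w s = Sum.inr i) := by
  rw [fvis, dif_pos h] at hs
  exact Nat.find_min h hs

lemma DtF_le_NtF (t : ℕ) : DtF w t ≤ NtF w t := by
  apply Finset.card_le_card_of_injOn (fvis w t)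
  · intro i hi
    rw [Finset.mem_coe, mem_Dfin] at hi
    obtain ⟨h1, h2, h3⟩ := fvis_spec w hi
    rw [Finset.mem_coe, Finset.mem_filter, Finset.mem_Icc]
    exact ⟨⟨h1, h2⟩, by rw [h3]; rfl⟩
  · intro i hi j hj hij
    rw [Finset.mem_coe, mem_Dfin] at hi hj
    have h3 := (fvis_spec w hi).2.2
    have h3' := (fvis_spec w hj).2.2
    rw [hij, h3'] at h3
    exact (Sum.inr_injective h3).symm

include hw in
lemma DtF_add_NtF (t : ℕ) : DtF w t + NtF w t ≤ t + 1 := by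
  rcases Finset.eq_empty_or_nonempty (Dfin w t) with hAe | hAne
  · have h0 : DtF w t = 0 := by rw [DtF, hAe]; rfl
    have := NtF_le w t
    omega
  · obtain ⟨i₀, hi₀, hmin⟩ := Finset.exists_min_image (Dfin w t) (fvis w t) hAne
    have hcard : ((Dfin w t).erase i₀).card
        ≤ ((Finset.Icc 1 t).filter (fun s => ¬ (w s).isRight)).card := by
      apply Finset.card_le_card_of_injOn (fun i => fvis w t i - 1)
      · intro i hi
        have hiA : i ∈ Dfin w t := Finset.mem_of_mem_erase hi
        have hine : i ≠ i₀ := Finset.ne_of_mem_erase hi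
        rw [mem_Dfin] at hiA
        obtain ⟨h1, h2, h3⟩ := fvis_spec w hiA
        have hi₀A := hi₀
        rw [mem_Dfin] at hi₀A
        have hfne : fvis w t i ≠ fvis w t i₀ := by
          intro he
          have h3' := (fvis_spec w hi₀A).2.2
          rw [he, h3'] at h3
          exact hine (Sum.inr_injective h3).symm
        have hgt : fvis w t i₀ < fvis w t i :=
          lt_of_le_of_ne (hmin i (Finset.mem_of_mem_erase hi)) (Ne.symm hfne)
        have h1' := (fvis_spec w hi₀A).1
        have hge2 : 2 ≤ fvis w t i := by omega
        have hstep := walk_step w hw (fvis w t i - 1) i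
          (by rw [Nat.sub_add_cancel (by omega)]; exact h3)
        rcases hstep with hbad | hctr
        · exact absurd ⟨by omega, by omega, hbad⟩
            (fvis_min w hiA (by omega : fvis w t i - 1 < fvis w t i))
        · dsimp only
          rw [Finset.mem_coe, Finset.mem_filter, Finset.mem_Icc, hctr]
          exact ⟨⟨by omega, by omega⟩, by simp⟩
      · intro i hi j hj hij
        dsimp only at hij
        rw [Finset.mem_coe] at hi hj
        have hiA : i ∈ Dfin w t := Finset.mem_of_mem_erase hi
        have hjA : j ∈ Dfin w t := Finset.mem_of_mem_erase hj
        rw [mem_Dfin] at hiA hjA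
        have h3 := (fvis_spec w hiA).2.2
        have h3' := (fvis_spec w hjA).2.2
        have h1 := (fvis_spec w hiA).1
        have h1' := (fvis_spec w hjA).1
        have he : fvis w t i = fvis w t j := by omega
        rw [he, h3'] at h3
        exact (Sum.inr_injective h3).symm
    have hsplit : NtF w t + ((Finset.Icc 1 t).filter (fun s => ¬ (w s).isRight)).card
        = (Finset.Icc 1 t).card := Finset.card_filter_add_card_filter_not _
    rw [Nat.card_Icc] at hsplit
    have herase : ((Dfin w t).erase i₀).card = (Dfin w t).card - 1 :=
      Finset.card_erase_of_mem hi₀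
    have hApos : 0 < (Dfin w t).card := Finset.card_pos.2 hAne
    have hDA : DtF w t = (Dfin w t).card := rfl
    omega

end Graph

/-! ### Measurability -/

instance discreteSum (k : ℕ) : DiscreteMeasurableSpace (Unit ⊕ Fin k) := by
  constructor
  intro s
  rw [measurableSet_sum_iff]
  exact ⟨MeasurableSet.of_discrete, MeasurableSet.of_discrete⟩

open Classical in
lemma sInf_eq_iInf_ite (Q : ℕ → Prop) :
    sInf {r : ℝ≥0∞ | ∃ t : ℕ, 1 ≤ t ∧ Q t ∧ r = (t : ℝ≥0∞)}
      = ⨅ t : ℕ, if 1 ≤ t ∧ Q t then (t : ℝ≥0∞) else ∞ := by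
  apply le_antisymm
  · apply le_iInf
    intro t
    by_cases h : 1 ≤ t ∧ Q t
    · rw [if_pos h]
      exact sInf_le ⟨t, h.1, h.2, rfl⟩
    · rw [if_neg h]
      exact le_top
  · apply le_sInf
    rintro r ⟨t, h1, h2, rfl⟩
    refine iInf_le_of_le t ?_
    rw [if_pos ⟨h1, h2⟩]

lemma measurable_hitlike {V Ω' : Type*} [MeasurableSpace V] [MeasurableSingletonClass V]
    [Countable V] [MeasurableSpace Ω'] (Y : ℕ → Ω' → V) (hY : ∀ t, Measurable (Y t)) :
    Measurable (fun q : (ℕ → V) × Ω' =>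
      sInf {r : ℝ≥0∞ | ∃ t : ℕ, 1 ≤ t ∧ q.1 t = Y t q.2 ∧ r = (t : ℝ≥0∞)}) := by
  classical
  have hrw : (fun q : (ℕ → V) × Ω' =>
      sInf {r : ℝ≥0∞ | ∃ t : ℕ, 1 ≤ t ∧ q.1 t = Y t q.2 ∧ r = (t : ℝ≥0∞)})
      = fun q => ⨅ t : ℕ, if 1 ≤ t ∧ q.1 t = Y t q.2 then (t : ℝ≥0∞) else ∞ := by
    funext q
    exact sInf_eq_iInf_ite _
  rw [hrw]
  apply Measurable.iInf
  intro t
  apply Measurable.ite ?_ measurable_const measurable_const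
  have : {q : (ℕ → V) × Ω' | 1 ≤ t ∧ q.1 t = Y t q.2}
      = if 1 ≤ t then ⋃ v : V, (((fun q : (ℕ → V) × Ω' => q.1 t) ⁻¹' {v})
          ∩ ((fun q : (ℕ → V) × Ω' => Y t q.2) ⁻¹' {v})) else ∅ := by
    by_cases h : 1 ≤ t
    · rw [if_pos h]
      ext q
      simp only [Set.mem_setOf_eq, Set.mem_iUnion, Set.mem_inter_iff, Set.mem_preimage,
        Set.mem_singleton_iff]
      constructor
      · rintro ⟨-, he⟩; exact ⟨Y t q.2, he, rfl⟩
      · rintro ⟨v, h1, h2⟩; exact ⟨h, h1.trans h2.symm⟩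
    · rw [if_neg h]
      ext q
      simp only [Set.mem_setOf_eq, Set.mem_empty_iff_false, iff_false]
      exact fun hc => h hc.1
  rw [this]
  by_cases h : 1 ≤ t
  · rw [if_pos h]
    apply MeasurableSet.iUnion
    intro v
    exact (((measurable_pi_apply t).comp measurable_fst) (measurableSet_singleton v)).inter
      (((hY t).comp measurable_snd) (measurableSet_singleton v))
  · rw [if_neg h]
    exact MeasurableSet.empty

lemma filter_not_mem_card {k : ℕ} (A : Finset (Fin k)) (P : Fin k → Prop) [DecidablePred P]
    (h : ∀ i, P i ↔ i ∉ A) : (Finset.univ.filter P).card = k - A.card := by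
  have hPA : Finset.univ.filter P = Aᶜ := by
    ext i
    simp [h i]
  rw [hPA, Finset.card_compl, Fintype.card_fin]

/-! ### The deterministic core estimate -/

lemma core_walk {k : ℕ} (hk : 45 ≤ k)
    (hne : (Finset.univ.image (Sum.inr : Fin k → Unit ⊕ Fin k)).Nonempty)
    {Ω : Type*} [MeasurableSpace Ω] (μ : Measure Ω) [IsProbabilityMeasure μ]
    (X : ℕ → Ω → Unit ⊕ Fin k)
    (hiid : IsIIDWithLaw μ (PMF.uniformOfFinset _ hne) X)
    (w : ℕ → Unit ⊕ Fin k) (hw : IsCopWalk (completeBipartiteGraph Unit (Fin k)) w) :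
    ((2*k+3 : ℕ) : ℝ≥0∞)
      ≤ (∫⁻ u, hitTime w u ∂((PMF.uniformOfFinset _ hne).toMeasure))
        + ∫⁻ ω, captureTime w X ω ∂μ := by
  classical
  obtain ⟨hindep, hX⟩ := hiid
  set L : Finset (Unit ⊕ Fin k) := Finset.univ.image (Sum.inr : Fin k → Unit ⊕ Fin k) with hL
  set p : PMF (Unit ⊕ Fin k) := PMF.uniformOfFinset L hne with hp
  have hk1 : 1 ≤ k := by omega
  have hk0 : (k : ℝ≥0∞) ≠ 0 := Nat.cast_ne_zero.2 (by omega)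
  have hktop : (k : ℝ≥0∞) ≠ ∞ := ENNReal.natCast_ne_top k
  have hLcard : L.card = k := by
    rw [hL, Finset.card_image_of_injective _ Sum.inr_injective, Finset.card_univ, Fintype.card_fin]
  have hpleaf : ∀ i : Fin k, p (Sum.inr i) = (k : ℝ≥0∞)⁻¹ := by
    intro i
    rw [hp, PMF.uniformOfFinset_apply, if_pos (by simp [hL]), hLcard]
  have hpcenter : p (Sum.inl ()) = 0 := by
    rw [hp]
    apply PMF.uniformOfFinset_apply_of_notMem
    simp [hL]
  -- the A side
  set KA : ℕ := ∑ t ∈ Finset.range (2*k), (k - DtF w t) with hKA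
  have hA : (KA : ℝ≥0∞) * (k : ℝ≥0∞)⁻¹ ≤ ∫⁻ u, hitTime w u ∂p.toMeasure := by
    rw [lintegral_countable' (fun u => hitTime w u)]
    have step1 : ∑ u ∈ L, hitTime w u * p.toMeasure {u}
        ≤ ∑' u, hitTime w u * p.toMeasure {u} := ENNReal.sum_le_tsum L
    refine le_trans ?_ step1
    rw [hL, Finset.sum_image (fun i _ j _ h => Sum.inr_injective h)]
    have hmeas : ∀ i : Fin k, p.toMeasure {Sum.inr i} = (k : ℝ≥0∞)⁻¹ := by
      intro i
      rw [PMF.toMeasure_apply_singleton _ _ (MeasurableSet.of_discrete), hpleaf i]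
    calc (KA : ℝ≥0∞) * (k : ℝ≥0∞)⁻¹
        = ∑ i : Fin k, ((badCount (fun t => w t = Sum.inr i) (2*k) : ℕ) : ℝ≥0∞) * (k:ℝ≥0∞)⁻¹ := by
          rw [← Finset.sum_mul]
          congr 1
          rw [← Nat.cast_sum]
          congr 1
          rw [hKA]
          -- swap the sums
          simp only [badCount, Finset.card_filter]
          rw [Finset.sum_comm]
          apply Finset.sum_congr rfl
          intro s _
          -- ∑ i, ite (no visit) 1 0 = k - DtF w s
          rw [← Finset.card_filter]
          refine (filter_not_mem_card (Dfin w s) _ ?_).symm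
          intro i
          rw [mem_Dfin]
          constructor
          · rintro h ⟨r, h1, h2, h3⟩
            exact h r (Finset.mem_Icc.2 ⟨h1, h2⟩) h3
          · intro h t ht hc
            rw [Finset.mem_Icc] at ht
            exact h ⟨t, ht.1, ht.2, hc⟩
      _ ≤ ∑ i : Fin k, hitTime w (Sum.inr i) * p.toMeasure {Sum.inr i} := by
          apply Finset.sum_le_sum
          intro i _
          rw [hmeas i]
          apply mul_le_mul_left
          exact count_le_sInf (fun t => w t = Sum.inr i) (2*k)
  -- the B side
  set noCap : ℕ → Set Ω := fun s => {ω | ∀ t ∈ Finset.Icc 1 s, ¬ w t = X t ω} with hnoCap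
  have hset : ∀ s, noCap s = ⋂ t ∈ Finset.Icc 1 s, (X t) ⁻¹' ({w t}ᶜ) := by
    intro s
    ext ω
    simp only [hnoCap, Set.mem_setOf_eq, Set.mem_iInter, Set.mem_preimage, Set.mem_compl_iff,
      Set.mem_singleton_iff]
    constructor
    · intro h t ht he; exact h t ht he.symm
    · intro h t ht he; exact h t ht he.symm
  have hmeasNC : ∀ s, MeasurableSet (noCap s) := by
    intro s
    rw [hset s]
    exact MeasurableSet.biInter (Finset.Icc 1 s).countable_toSet
      (fun t _ => (hX t).1 (MeasurableSet.of_discrete))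
  set q : ℝ≥0∞ := ((k - 1 : ℕ) : ℝ≥0∞) / (k : ℝ≥0∞) with hq
  have hq1 : q + (k:ℝ≥0∞)⁻¹ = 1 := by
    rw [hq, ← one_div, ENNReal.div_add_div_same]
    have hnum : ((k - 1 : ℕ) : ℝ≥0∞) + 1 = (k : ℝ≥0∞) := by
      exact_mod_cast congrArg (Nat.cast (R := ℝ≥0∞)) (by omega : (k - 1) + 1 = k)
    rw [hnum, ENNReal.div_self hk0 hktop]
  have hqle1 : q ≤ 1 := by
    rw [← hq1]; exact le_self_add
  have hprob : ∀ s, q ^ (NtF w s) ≤ μ (noCap s) := by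
    intro s
    have hcalc : μ (noCap s) = ∏ t ∈ Finset.Icc 1 s, μ ((X t) ⁻¹' ({w t}ᶜ)) := by
      rw [hset s]
      exact hindep.measure_inter_preimage_eq_mul (Finset.Icc 1 s)
        (fun t _ => MeasurableSet.of_discrete)
    have hfac : ∀ t, μ ((X t) ⁻¹' ({w t}ᶜ)) = 1 - p (w t) := by
      intro t
      rw [← Measure.map_apply (hX t).1 (MeasurableSet.of_discrete), (hX t).2]
      rw [prob_compl_eq_one_sub (MeasurableSet.of_discrete)]
      rw [PMF.toMeasure_apply_singleton _ _ (MeasurableSet.of_discrete)]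
    rw [hcalc]
    calc q ^ (NtF w s) = ∏ t ∈ Finset.Icc 1 s, (if (w t).isRight then q else 1) := by
          rw [Finset.prod_ite, Finset.prod_const, Finset.prod_const_one, mul_one, NtF]
      _ ≤ ∏ t ∈ Finset.Icc 1 s, μ ((X t) ⁻¹' ({w t}ᶜ)) := by
          apply Finset.prod_le_prod'
          intro t _
          rw [hfac t]
          rcases hv : w t with u | i
          · cases u
            rw [hpcenter, tsub_zero]
            simp
          · simp only [Sum.isRight_inr, if_true]
            rw [hpleaf i]
            rw [← hq1, ENNReal.add_sub_cancel_right (ENNReal.inv_ne_top.2 hk0)]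
  set KB : ℕ := ∑ s ∈ Finset.range (2*k), (2*k - (NtF w s + 1))^2 with hKB
  have hB : (KB : ℝ≥0∞) / ((4*k^2 : ℕ) : ℝ≥0∞) ≤ ∫⁻ ω, captureTime w X ω ∂μ := by
    have hstep1 : ∑ s ∈ Finset.range (2*k), μ (noCap s) ≤ ∫⁻ ω, captureTime w X ω ∂μ := by
      have hpt : ∀ ω, (∑ s ∈ Finset.range (2*k), (noCap s).indicator (fun _ => (1:ℝ≥0∞)) ω)
          ≤ captureTime w X ω := by
        intro ω
        have hc := count_le_sInf (fun t => w t = X t ω) (2*k)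
        refine le_trans ?_ hc
        rw [badCount, Finset.card_filter, Nat.cast_sum]
        apply le_of_eq
        apply Finset.sum_congr rfl
        intro s _
        by_cases h : ω ∈ noCap s
        · have h' : ∀ t ∈ Finset.Icc 1 s, ¬ w t = X t ω := h
          rw [Set.indicator_of_mem h, if_pos h', Nat.cast_one]
        · have h' : ¬ ∀ t ∈ Finset.Icc 1 s, ¬ w t = X t ω := h
          rw [Set.indicator_of_notMem h, if_neg h', Nat.cast_zero]
      calc ∑ s ∈ Finset.range (2*k), μ (noCap s)
          = ∑ s ∈ Finset.range (2*k), ∫⁻ ω, (noCap s).indicator (fun _ => (1:ℝ≥0∞)) ω ∂μ := by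
            apply Finset.sum_congr rfl
            intro s _
            rw [lintegral_indicator_const (hmeasNC s), one_mul]
        _ = ∫⁻ ω, (∑ s ∈ Finset.range (2*k), (noCap s).indicator (fun _ => (1:ℝ≥0∞)) ω) ∂μ := by
            rw [lintegral_finset_sum]
            intro s _
            exact (measurable_const.indicator (hmeasNC s))
        _ ≤ ∫⁻ ω, captureTime w X ω ∂μ := lintegral_mono hpt
    refine le_trans ?_ hstep1
    rw [hKB, Nat.cast_sum, div_eq_mul_inv, Finset.sum_mul]
    apply Finset.sum_le_sum
    intro s _
    rw [← div_eq_mul_inv]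
    refine le_trans ?_ (hprob s)
    -- ((2k - (x+1))^2 : ℕ) / (4k^2) ≤ q ^ x
    set x := NtF w s
    apply ENNReal.div_le_of_le_mul
    have hnat := pow_bound_sq k hk1 x
    have hcast : (((2*k - (x+1))^2 : ℕ) : ℝ≥0∞) * ((k:ℝ≥0∞)^x)
        ≤ ((4*k^2 : ℕ) : ℝ≥0∞) * ((k-1:ℕ) : ℝ≥0∞)^x := by
      have := (Nat.cast_le (α := ℝ≥0∞)).2 hnat
      push_cast at this ⊢
      convert this using 1 <;> ring
    have hqpow : q ^ x = ((k-1:ℕ) : ℝ≥0∞)^x / ((k:ℝ≥0∞)^x) := by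
      rw [hq, ennreal_div_pow]
    have hre : ((k-1:ℕ) : ℝ≥0∞)^x / ((k:ℝ≥0∞)^x) * ((4*k^2 : ℕ) : ℝ≥0∞)
        = (((4*k^2 : ℕ) : ℝ≥0∞) * ((k-1:ℕ) : ℝ≥0∞)^x) / ((k:ℝ≥0∞)^x) := by
      rw [div_eq_mul_inv, div_eq_mul_inv]; ring
    rw [hqpow, hre, ENNReal.le_div_iff_mul_le (Or.inl (pow_ne_zero x hk0))
      (Or.inl (ENNReal.pow_ne_top hktop))]
    exact hcast
  -- combine
  have hcore : (4*k^2*(2*k+3) : ℕ) ≤ 4*k*KA + KB := by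
    rw [hKA, hKB]
    exact core_sum k hk (DtF w) (NtF w)
      (fun t _ => DtF_le_NtF w t)
      (fun t _ => DtF_add_NtF w hw t)
      (fun t => DtF_le w t)
  have h4k2 : ((4*k^2:ℕ) : ℝ≥0∞) ≠ 0 := by
    simp only [ne_eq, Nat.cast_eq_zero]
    positivity
  have h4k2' : ((4*k^2:ℕ) : ℝ≥0∞) ≠ ∞ := ENNReal.natCast_ne_top _
  calc ((2*k+3 : ℕ) : ℝ≥0∞)
      = ((4*k^2*(2*k+3) : ℕ) : ℝ≥0∞) / ((4*k^2:ℕ) : ℝ≥0∞) := by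
        rw [Nat.cast_mul, mul_div_assoc, ENNReal.mul_div_cancel h4k2 h4k2']
    _ ≤ (((4*k*KA + KB : ℕ)) : ℝ≥0∞) / ((4*k^2:ℕ) : ℝ≥0∞) := by
        apply ENNReal.div_le_div_right
        exact_mod_cast hcore
    _ = ((4*k*KA : ℕ) : ℝ≥0∞) / ((4*k^2:ℕ) : ℝ≥0∞) + (KB : ℝ≥0∞) / ((4*k^2:ℕ) : ℝ≥0∞) := by
        push_cast
        rw [ENNReal.div_add_div_same]
    _ ≤ (KA : ℝ≥0∞) * (k : ℝ≥0∞)⁻¹ + (KB : ℝ≥0∞) / ((4*k^2:ℕ) : ℝ≥0∞) := by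
        apply add_le_add_left
        apply le_of_eq
        have : ((4*k*KA : ℕ) : ℝ≥0∞) = ((4*k:ℕ) : ℝ≥0∞) * (KA : ℝ≥0∞) := by push_cast; ring
        have h2 : ((4*k^2:ℕ) : ℝ≥0∞) = ((4*k:ℕ) : ℝ≥0∞) * (k : ℝ≥0∞) := by push_cast; ring
        rw [this, h2, ENNReal.mul_div_mul_left _ _ (by positivity) (ENNReal.natCast_ne_top _),
          div_eq_mul_inv]
    _ ≤ _ := add_le_add hA hB

/-! ### Main theorem -/

set_option maxHeartbeats 1000000 in
set_option synthInstance.maxHeartbeats 200000 in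
/-- **Lemma 4.2 (the unknown gambler beats the known gambler on the star).**
There is an `N` such that for all `n ≥ N` the following holds on the star
`K_{1,n-1}` (vertex set `Unit ⊕ Fin (n-1)`, center `Sum.inl ()`, leaves `Sum.inr i`):
for every randomized cop strategy, i.e. every probability measure `σ` on the sequence
space `ℕ → V` (with the product sigma-algebra) concentrated on cop walks and independent
of the gambler's randomness, at least one of the following expected capture times
exceeds `n`:
(a) against the random sitter, a uniformly random leaf `L` (capture time is the hitting
time of `L`), the expectation taken over `σ` and `L`;
(b) against the gamble uniform on the `n-1` leaves, the expectation taken over `σ` and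
the i.i.d. gambler positions. -/
theorem unknown_gambler_stronger_on_star :
    ∃ N : ℕ, ∀ n : ℕ, N ≤ n →
      ∀ hne : (Finset.univ.image (Sum.inr : Fin (n - 1) → Unit ⊕ Fin (n - 1))).Nonempty,
        ∀ σ : Measure (ℕ → Unit ⊕ Fin (n - 1)), IsProbabilityMeasure σ →
          σ {w | IsCopWalk (completeBipartiteGraph Unit (Fin (n - 1))) w} = 1 →
          ∀ (Ω : Type*) (_ : MeasurableSpace Ω) (μ : Measure Ω), IsProbabilityMeasure μ →
            ∀ X : ℕ → Ω → Unit ⊕ Fin (n - 1),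
              IsIIDWithLaw μ (PMF.uniformOfFinset _ hne) X →
              (n : ℝ≥0∞) <
                  ∫⁻ q, hitTime q.1 q.2
                    ∂(σ.prod (PMF.uniformOfFinset _ hne).toMeasure) ∨
              (n : ℝ≥0∞) < ∫⁻ q, captureTime q.1 X q.2 ∂(σ.prod μ) := by
  refine ⟨100, ?_⟩
  intro n hn hne σ hσp hσcop Ω mΩ μ hμp X hiid
  haveI := hσp
  haveI := hμp
  let V := Unit ⊕ Fin (n - 1)
  let G := completeBipartiteGraph Unit (Fin (n - 1))
  let ν := (PMF.uniformOfFinset _ hne).toMeasure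
  haveI : IsProbabilityMeasure ν := PMF.toMeasure.isProbabilityMeasure _
  haveI : SFinite ν := inferInstance
  have hk : 45 ≤ n - 1 := by omega
  by_contra hcon
  push_neg at hcon
  obtain ⟨ha, hb⟩ := hcon
  -- measurability
  have hmh : Measurable (fun q : (ℕ → V) × V => hitTime q.1 q.2) :=
    measurable_hitlike (fun _ => (id : V → V)) (fun _ => measurable_id)
  have hmc : Measurable (fun q : (ℕ → V) × Ω => captureTime q.1 X q.2) :=
    measurable_hitlike X (fun t => (hiid.2 t).1)
  rw [lintegral_prod _ hmh.aemeasurable] at ha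
  rw [lintegral_prod _ hmc.aemeasurable] at hb
  -- almost every walk is a cop walk
  have hcopmeas : MeasurableSet {w : ℕ → V | IsCopWalk G w} := by
    have hrw : {w : ℕ → V | IsCopWalk G w}
        = ⋂ t : ℕ, (fun w : ℕ → V => (w t, w (t+1)))
            ⁻¹' {p : V × V | p.2 = p.1 ∨ G.Adj p.1 p.2} := by
      ext w'
      simp only [Set.mem_setOf_eq, Set.mem_iInter, Set.mem_preimage, IsCopWalk]
    rw [hrw]
    apply MeasurableSet.iInter
    intro t
    exact ((measurable_pi_apply t).prodMk (measurable_pi_apply (t+1)))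
      (Set.to_countable _).measurableSet
  have hae : ∀ᵐ w ∂σ, IsCopWalk G w := by
    have h1 : σ ({w : ℕ → V | IsCopWalk G w}ᶜ) = 0 := by
      rw [measure_compl hcopmeas (measure_ne_top σ _), hσcop, measure_univ, tsub_self]
    rw [ae_iff, Set.compl_setOf] at *
    exact h1
  have hptwise : ∀ᵐ w ∂σ, ((2*(n-1)+3 : ℕ) : ℝ≥0∞)
      ≤ (∫⁻ u, hitTime w u ∂ν) + ∫⁻ ω, captureTime w X ω ∂μ :=
    hae.mono (fun w hw => core_walk hk hne μ X hiid w hw)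
  have hmint : Measurable (fun w : ℕ → V => ∫⁻ u, hitTime w u ∂ν) :=
    hmh.lintegral_prod_right'
  have hsum : ∫⁻ w, ((∫⁻ u, hitTime w u ∂ν) + ∫⁻ ω, captureTime w X ω ∂μ) ∂σ
      ≤ (n : ℝ≥0∞) + n := by
    rw [lintegral_add_left hmint]
    exact add_le_add ha hb
  have hlow : ((2*(n-1)+3 : ℕ) : ℝ≥0∞)
      ≤ ∫⁻ w, ((∫⁻ u, hitTime w u ∂ν) + ∫⁻ ω, captureTime w X ω ∂μ) ∂σ := by
    calc ((2*(n-1)+3 : ℕ) : ℝ≥0∞) = ∫⁻ _, ((2*(n-1)+3 : ℕ) : ℝ≥0∞) ∂σ := by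
          rw [lintegral_const, measure_univ, mul_one]
      _ ≤ _ := lintegral_mono_ae hptwise
  have hcontr : ((2*(n-1)+3 : ℕ) : ℝ≥0∞) ≤ (n : ℝ≥0∞) + n := le_trans hlow hsum
  have hkn : (2*(n-1)+3 : ℕ) = 2*n+1 := by omega
  rw [hkn] at hcontr
  have h2n : ((2*n+1 : ℕ) : ℝ≥0∞) = ((n : ℝ≥0∞) + n) + 1 := by push_cast; ring
  rw [h2n] at hcontr
  have hfin : (n : ℝ≥0∞) + n ≠ ∞ := by
    simp [ENNReal.add_ne_top]
  exact absurd hcontr (not_le.2 (ENNReal.lt_add_right hfin one_ne_zero))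
end
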